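/- arXiv:2209.03587 — 7 statements merged into one kernel-verified Lean document; each statement's English description precedes it below -/
import Mathlib

section
/- Let X be a complete separable metric space. For every N' < 0, ε > 0 and E ∈ (0,∞) there exists δ > 0 with the following property: whenever μ, ν are Borel probability measures on X with S_{N',μ}(ν) ≤ E and X̃ ⊆ X is a Borel set with μ(X \ X̃) < δ, then ν(X \ X̃) < ε. In particular, if μ_n, ν_n are sequences of Borel probability measures on X such that {μ_n} is tight and sup_{n} S_{N',μ_n}(ν_n) < ∞, then {ν_n} is tight. -/
/-- A bundled mm-space: a complete separable metric space with a Borel probability measure. -/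
structure MMSpace where
  X : Type
  [metric : MetricSpace X]
  [cpl : CompleteSpace X]
  [sep : TopologicalSpace.SeparableSpace X]
  [mble : MeasurableSpace X]
  [borel : BorelSpace X]
  μ : MeasureTheory.Measure X
  [prob : MeasureTheory.IsProbabilityMeasure μ]

attribute [instance] MMSpace.metric MMSpace.cpl MMSpace.sep MMSpace.mble MMSpace.borel MMSpace.prob

open MeasureTheory ENNReal Filter Topology Set

noncomputable section

/-- A coupling of two measures on `X` is a measure on `X × X` whose marginals are the
given measures. -/
def IsCoupling {X : Type*} [MeasurableSpace X] (π : Measure (X × X)) (μ ν : Measure X) : Prop :=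
  π.map Prod.fst = μ ∧ π.map Prod.snd = ν

/-- A measure has finite second moment if `∫ d(x,x₀)² dμ < ∞` for some base point. -/
def HasFiniteSecondMoment {X : Type*} [PseudoMetricSpace X] [MeasurableSpace X]
    (μ : Measure X) : Prop :=
  ∃ x₀ : X, ∫⁻ x, ENNReal.ofReal (dist x x₀) ^ 2 ∂μ < ∞

/-- The square-root of the quadratic transport cost of a coupling. -/
def cost2 {X : Type*} [PseudoMetricSpace X] [MeasurableSpace X] (π : Measure (X × X)) : ℝ≥0∞ :=
  (∫⁻ p, ENNReal.ofReal (dist p.1 p.2) ^ 2 ∂π) ^ (1 / 2 : ℝ)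

/-- The 2-Wasserstein distance (valued in `[0,∞]`). -/
def W2 {X : Type*} [PseudoMetricSpace X] [MeasurableSpace X] (μ ν : Measure X) : ℝ≥0∞ :=
  ⨅ (π : Measure (X × X)) (_ : IsCoupling π μ ν), cost2 π

/-- A coupling is optimal if it attains the 2-Wasserstein distance. -/
def IsOptimalCoupling {X : Type*} [PseudoMetricSpace X] [MeasurableSpace X]
    (π : Measure (X × X)) (μ ν : Measure X) : Prop :=
  IsCoupling π μ ν ∧ cost2 π = W2 μ ν

open Classical in
/-- The Rényi entropy `S_{N',μ}(ν) = ∫ ρ^{1-1/N'} dμ` if `ν = ρμ ≪ μ`, and `∞` otherwise. -/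
def renyiEntropy {X : Type*} [MeasurableSpace X] (N' : ℝ) (μ ν : Measure X) : ℝ≥0∞ :=
  if ν ≪ μ then ∫⁻ x, (ν.rnDeriv μ x) ^ (1 - 1 / N') ∂μ else ∞

/-- Weak convergence of a sequence of measures: convergence of integrals of all bounded
continuous functions. -/
def WeakConv {X : Type*} [TopologicalSpace X] [MeasurableSpace X]
    (μs : ℕ → Measure X) (μ : Measure X) : Prop :=
  ∀ f : BoundedContinuousFunction X ℝ,
    Tendsto (fun n => ∫ x, f x ∂(μs n)) atTop (𝓝 (∫ x, f x ∂μ))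

/-- Tightness of a sequence of measures. -/
def IsTightSeq {X : Type*} [TopologicalSpace X] [MeasurableSpace X]
    (μs : ℕ → Measure X) : Prop :=
  ∀ ε : ℝ, 0 < ε → ∃ K : Set X, IsCompact K ∧ ∀ n, μs n Kᶜ < ENNReal.ofReal ε

/-- The function `s_κ`, with the convention `s_κ(0) = 1`. -/
def sKappa (κ θ : ℝ) : ℝ :=
  if θ = 0 then 1
  else if 0 < κ then Real.sin (Real.sqrt κ * θ) / (Real.sqrt κ * θ)
  else if κ < 0 then Real.sinh (Real.sqrt (-κ) * θ) / (Real.sqrt (-κ) * θ)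
  else 1

/-- `ω_κ = π/√κ` for `κ > 0` and `∞` otherwise. -/
def omegaKappa (κ : ℝ) : ℝ≥0∞ :=
  if 0 < κ then ENNReal.ofReal (Real.pi / Real.sqrt κ) else ∞

/-- The coefficient `τ_{K,N}^{(t)}(θ)`, valued in `[0,∞]`. -/
def tauCoeff (K N t θ : ℝ) : ℝ≥0∞ :=
  if ENNReal.ofReal θ < omegaKappa (K / (N - 1)) then
    ENNReal.ofReal (t * (sKappa (K / (N - 1)) (t * θ) / sKappa (K / (N - 1)) θ) ^ (1 - 1 / N))
  else ∞

/-- The coefficient `σ_κ^{(t)}(θ)`, valued in `[0,∞]`. -/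
def sigmaCoeff (κ t θ : ℝ) : ℝ≥0∞ :=
  if ENNReal.ofReal θ < omegaKappa κ then
    ENNReal.ofReal (t * sKappa κ (t * θ) / sKappa κ θ)
  else ∞

/-- The curvature-dimension condition `CD(K,N)` for `N < 0`, for a (probability) measure on a
metric space. -/
def IsCDSpace {X : Type*} [MetricSpace X] [MeasurableSpace X] (K N : ℝ) (μX : Measure X) : Prop :=
  ∀ ν₀ ν₁ : Measure X, IsProbabilityMeasure ν₀ → IsProbabilityMeasure ν₁ →
    ν₀ ≪ μX → ν₁ ≪ μX →
    HasFiniteSecondMoment ν₀ → HasFiniteSecondMoment ν₁ →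
    renyiEntropy N μX ν₀ < ∞ → renyiEntropy N μX ν₁ < ∞ →
    ∃ (νt : ℝ → Measure X) (π : Measure (X × X)),
      νt 0 = ν₀ ∧ νt 1 = ν₁ ∧
      (∀ s ∈ Icc (0:ℝ) 1, ∀ t ∈ Icc (0:ℝ) 1,
        W2 (νt s) (νt t) = ENNReal.ofReal |s - t| * W2 ν₀ ν₁) ∧
      IsOptimalCoupling π ν₀ ν₁ ∧
      (∀ t ∈ Icc (0:ℝ) 1, ∀ N' ∈ Ico N (0:ℝ),
        renyiEntropy N' μX ν₀ < ∞ → renyiEntropy N' μX ν₁ < ∞ →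
        renyiEntropy N' μX (νt t) ≤
          (∫⁻ p, tauCoeff K N' (1 - t) (dist p.1 p.2) * (ν₀.rnDeriv μX p.1) ^ (-(1 / N')) ∂π)
          + ∫⁻ p, tauCoeff K N' t (dist p.1 p.2) * (ν₁.rnDeriv μX p.2) ^ (-(1 / N')) ∂π)

/-- The reduced curvature-dimension condition `CD*(K,N)` for `N < 0`. -/
def IsCDStarSpace {X : Type*} [MetricSpace X] [MeasurableSpace X] (K N : ℝ)
    (μX : Measure X) : Prop :=
  ∀ ν₀ ν₁ : Measure X, IsProbabilityMeasure ν₀ → IsProbabilityMeasure ν₁ →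
    ν₀ ≪ μX → ν₁ ≪ μX →
    HasFiniteSecondMoment ν₀ → HasFiniteSecondMoment ν₁ →
    renyiEntropy N μX ν₀ < ∞ → renyiEntropy N μX ν₁ < ∞ →
    ∃ (νt : ℝ → Measure X) (π : Measure (X × X)),
      νt 0 = ν₀ ∧ νt 1 = ν₁ ∧
      (∀ s ∈ Icc (0:ℝ) 1, ∀ t ∈ Icc (0:ℝ) 1,
        W2 (νt s) (νt t) = ENNReal.ofReal |s - t| * W2 ν₀ ν₁) ∧
      IsOptimalCoupling π ν₀ ν₁ ∧
      (∀ t ∈ Icc (0:ℝ) 1, ∀ N' ∈ Ico N (0:ℝ),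
        renyiEntropy N' μX ν₀ < ∞ → renyiEntropy N' μX ν₁ < ∞ →
        renyiEntropy N' μX (νt t) ≤
          (∫⁻ p, sigmaCoeff (K / N') (1 - t) (dist p.1 p.2)
              * (ν₀.rnDeriv μX p.1) ^ (-(1 / N')) ∂π)
          + ∫⁻ p, sigmaCoeff (K / N') t (dist p.1 p.2)
              * (ν₁.rnDeriv μX p.2) ^ (-(1 / N')) ∂π)

/-- The conditioned (normalized restricted) measure `ν_B`. -/
def condProb {X : Type*} [MeasurableSpace X] (ν : Measure X) (B : Set X) : Measure X :=
  (ν B)⁻¹ • ν.restrict B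

/-- Inverse hyperbolic cosine, `arcosh x = log (x + √(x²-1))`. -/
def acosh (x : ℝ) : ℝ := Real.log (x + Real.sqrt (x ^ 2 - 1))

/-- A parameter of an mm-space: a Borel map `[0,1) → X` pushing the Lebesgue measure to `μ`. -/
def IsParameter (A : MMSpace) (φ : ℝ → A.X) : Prop :=
  Measurable φ ∧ Measure.map φ (volume.restrict (Ico (0:ℝ) 1)) = A.μ

/-- The Ky Fan distance between two measurable functions on `[0,1)`. -/
def kyFan (f g : ℝ → ℝ) : ℝ :=
  sInf {ε : ℝ | 0 ≤ ε ∧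
    (volume.restrict (Ico (0:ℝ) 1)) {x | ε < |f x - g x|} ≤ ENNReal.ofReal ε}

/-- The pullback of the 1-Lipschitz functions on an mm-space by a parameter. -/
def pullLip (A : MMSpace) (φ : ℝ → A.X) : Set (ℝ → ℝ) :=
  {h | ∃ f : A.X → ℝ, LipschitzWith 1 f ∧ h = f ∘ φ}

/-- The Hausdorff distance between two sets of functions with respect to the Ky Fan metric. -/
def hausdorffKF (A B : Set (ℝ → ℝ)) : ℝ :=
  max (⨆ f ∈ A, ⨅ g ∈ B, kyFan f g) (⨆ g ∈ B, ⨅ f ∈ A, kyFan f g)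

/-- The observable distance between two mm-spaces. -/
def dconc (A B : MMSpace) : ℝ :=
  sInf {r : ℝ | ∃ φ ψ, IsParameter A φ ∧ IsParameter B ψ ∧
    r = hausdorffKF (pullLip A φ) (pullLip B ψ)}

end

noncomputable section

/-- The smooth approximation `F_a(x) = a⁻¹ log(e^{ax} + e^{-ax})` of `|x|`. -/
def Fa (a x : ℝ) : ℝ := a⁻¹ * Real.log (Real.exp (a * x) + Real.exp (-(a * x)))

/-- A (minimizing, constant-speed) geodesic parametrized by `[0,1]`. -/
def IsGeodOn01 {X : Type*} [PseudoMetricSpace X] (γ : ℝ → X) : Prop :=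
  ∀ s ∈ Set.Icc (0:ℝ) 1, ∀ s' ∈ Set.Icc (0:ℝ) 1,
    dist (γ s) (γ s') = |s - s'| * dist (γ 0) (γ 1)

end

/-!
With `p = 1 - 1/N' > 1` the entropy is `S = ∫ ρ^p dμ`, whose Hölder conjugate exponent is
`1 - N'`. Hölder's inequality on a set `A` gives `ν A = ∫_A ρ dμ ≤ S^(1/p) μ(A)^(1/(1-N'))`,
so a bound on `S` makes `ν` uniformly absolutely continuous with respect to `μ`, and compact
sets witnessing tightness of `μₙ` witness tightness of `νₙ`.
-/

theorem Real.holderConjugate_one_sub_one_div_one_sub {N : ℝ} (hN : N < 0) :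
    (1 - 1 / N).HolderConjugate (1 - N) := by
  have hN1 : N - 1 ≠ 0 := by linarith
  have hN1' : 1 - N ≠ 0 := by linarith
  refine Real.holderConjugate_iff.mpr ⟨by linarith [one_div_neg.mpr hN], ?_⟩
  rw [show 1 - 1 / N = (N - 1) / N by field_simp [hN.ne], inv_div]
  field_simp
  ring

section

variable {X : Type*} [MeasurableSpace X]

theorem measure_le_lintegral_rnDeriv_rpow_mul_measure_rpow {μ ν : Measure X}
    [ν.HaveLebesgueDecomposition μ] [SFinite μ] (hνμ : ν ≪ μ) {p q : ℝ}
    (hpq : p.HolderConjugate q) (s : Set X) :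
    ν s ≤ (∫⁻ x, ν.rnDeriv μ x ^ p ∂μ) ^ (1 / p) * μ s ^ (1 / q) := by
  have hHolder := lintegral_mul_le_Lp_mul_Lq (μ.restrict s) hpq
    (Measure.measurable_rnDeriv ν μ).aemeasurable (aemeasurable_const (b := (1 : ℝ≥0∞)))
  simp only [Pi.mul_apply, mul_one, ENNReal.one_rpow, lintegral_one,
    Measure.restrict_apply_univ] at hHolder
  calc ν s = ∫⁻ x in s, ν.rnDeriv μ x ∂μ := (Measure.setLIntegral_rnDeriv hνμ s).symm
    _ ≤ (∫⁻ x in s, ν.rnDeriv μ x ^ p ∂μ) ^ (1 / p) * μ s ^ (1 / q) := hHolder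
    _ ≤ (∫⁻ x, ν.rnDeriv μ x ^ p ∂μ) ^ (1 / p) * μ s ^ (1 / q) := by
      gcongr
      · exact hpq.one_div_nonneg
      · exact Measure.restrict_le_self

theorem absolutelyContinuous_of_renyiEntropy_ne_top {N' : ℝ} {μ ν : Measure X}
    (hS : renyiEntropy N' μ ν ≠ ∞) : ν ≪ μ := by
  by_contra h
  exact hS (if_neg h)

theorem renyiEntropy_of_absolutelyContinuous {N' : ℝ} {μ ν : Measure X} (hνμ : ν ≪ μ) :
    renyiEntropy N' μ ν = ∫⁻ x, ν.rnDeriv μ x ^ (1 - 1 / N') ∂μ :=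
  if_pos hνμ

theorem measure_le_renyiEntropy_rpow_mul_measure_rpow {N' : ℝ} (hN' : N' < 0)
    {μ ν : Measure X} [SigmaFinite μ] [SFinite ν] (hS : renyiEntropy N' μ ν ≠ ∞) (s : Set X) :
    ν s ≤ renyiEntropy N' μ ν ^ (1 / (1 - 1 / N')) * μ s ^ (1 / (1 - N')) := by
  have hνμ := absolutelyContinuous_of_renyiEntropy_ne_top hS
  rw [renyiEntropy_of_absolutelyContinuous hνμ]
  exact measure_le_lintegral_rnDeriv_rpow_mul_measure_rpow hνμ
    (Real.holderConjugate_one_sub_one_div_one_sub hN') s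

theorem exists_pos_forall_measure_lt_of_renyiEntropy_le {N' ε : ℝ} (hN' : N' < 0)
    (hε : 0 < ε) {E : ℝ≥0∞} (hE : E ≠ ∞) :
    ∃ δ : ℝ, 0 < δ ∧ ∀ (μ ν : Measure X) [SigmaFinite μ] [SFinite ν],
      renyiEntropy N' μ ν ≤ E → ∀ s, μ s < ENNReal.ofReal δ → ν s < ENNReal.ofReal ε := by
  have hpq := Real.holderConjugate_one_sub_one_div_one_sub hN'
  set p := 1 - 1 / N'
  set q := 1 - N'
  set a := E.toReal ^ (1 / p)
  have ha : 0 ≤ a := by positivity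
  have hδq : ((ε / (a + 1)) ^ q) ^ (1 / q) = ε / (a + 1) := by
    rw [← Real.rpow_mul (by positivity), mul_one_div_cancel hpq.symm.ne_zero, Real.rpow_one]
  refine ⟨(ε / (a + 1)) ^ q, by positivity, fun μ ν _ _ hSE s hs => ?_⟩
  calc ν s ≤ renyiEntropy N' μ ν ^ (1 / p) * μ s ^ (1 / q) :=
        measure_le_renyiEntropy_rpow_mul_measure_rpow hN' (ne_top_of_le_ne_top hE hSE) s
    _ ≤ E ^ (1 / p) * ENNReal.ofReal ((ε / (a + 1)) ^ q) ^ (1 / q) := by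
      gcongr
      · exact hpq.one_div_nonneg
      · exact hpq.symm.one_div_nonneg
    _ = ENNReal.ofReal (a * (ε / (a + 1))) := by
      rw [← ENNReal.ofReal_toReal hE, ENNReal.ofReal_rpow_of_nonneg ENNReal.toReal_nonneg
        hpq.one_div_nonneg, ENNReal.ofReal_rpow_of_nonneg (by positivity)
        hpq.symm.one_div_nonneg, hδq, ← ENNReal.ofReal_mul ha]
    _ < ENNReal.ofReal ε := by
      rw [ENNReal.ofReal_lt_ofReal_iff hε, ← mul_div_assoc, div_lt_iff₀ (by positivity)]
      nlinarith

theorem IsTightSeq.of_iSup_renyiEntropy_lt_top [TopologicalSpace X] {N' : ℝ} (hN' : N' < 0)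
    {μs νs : ℕ → Measure X} [∀ n, SigmaFinite (μs n)] [∀ n, SFinite (νs n)]
    (hμs : IsTightSeq μs) (hS : ⨆ n, renyiEntropy N' (μs n) (νs n) < ∞) : IsTightSeq νs := by
  intro ε hε
  obtain ⟨δ, hδ, hνδ⟩ := exists_pos_forall_measure_lt_of_renyiEntropy_le (X := X) hN' hε hS.ne
  obtain ⟨K, hK, hμK⟩ := hμs δ hδ
  exact ⟨K, hK, fun n =>
    hνδ (μs n) (νs n) (le_iSup (fun n => renyiEntropy N' (μs n) (νs n)) n) Kᶜ (hμK n)⟩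

end

theorem renyiEntropy_uniform_absolute_continuity_general {X : Type*} [MetricSpace X] [MeasurableSpace X]
    (N' ε E : ℝ) (hN' : N' < 0) (hε : 0 < ε) :
    (∃ δ : ℝ, 0 < δ ∧ ∀ μ ν : Measure X, IsProbabilityMeasure μ → IsProbabilityMeasure ν →
      renyiEntropy N' μ ν ≤ ENNReal.ofReal E →
      ∀ Xt : Set X, MeasurableSet Xt → μ Xtᶜ < ENNReal.ofReal δ → ν Xtᶜ < ENNReal.ofReal ε) ∧
    (∀ μs νs : ℕ → Measure X,
      (∀ n, IsProbabilityMeasure (μs n)) → (∀ n, IsProbabilityMeasure (νs n)) →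
      IsTightSeq μs → (⨆ n, renyiEntropy N' (μs n) (νs n)) < ∞ → IsTightSeq νs) := by
  obtain ⟨δ, hδ, hνδ⟩ :=
    exists_pos_forall_measure_lt_of_renyiEntropy_le (X := X) hN' hε ENNReal.ofReal_ne_top
  exact ⟨⟨δ, hδ, fun μ ν _ _ hSE Xt _ hμXt => hνδ μ ν hSE Xtᶜ hμXt⟩,
    fun _ _ _ _ hμs hS => hμs.of_iSup_renyiEntropy_lt_top hN' hS⟩

open MeasureTheory Set in
/-- Uniform absolute continuity from entropy bounds: small `μ`-measure of a
complement forces small `ν`-measure when `S_{N',μ}(ν) ≤ E`; in particular tightness of `μₙ`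
together with a uniform entropy bound implies tightness of `νₙ`. -/
theorem renyiEntropy_uniform_absolute_continuity {X : Type*} [MetricSpace X] [CompleteSpace X]
    [TopologicalSpace.SeparableSpace X] [MeasurableSpace X] [BorelSpace X]
    (N' ε E : ℝ) (hN' : N' < 0) (hε : 0 < ε) (hE : 0 < E) :
    (∃ δ : ℝ, 0 < δ ∧ ∀ μ ν : Measure X, IsProbabilityMeasure μ → IsProbabilityMeasure ν →
      renyiEntropy N' μ ν ≤ ENNReal.ofReal E →
      ∀ Xt : Set X, MeasurableSet Xt → μ Xtᶜ < ENNReal.ofReal δ → ν Xtᶜ < ENNReal.ofReal ε) ∧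
    (∀ μs νs : ℕ → Measure X,
      (∀ n, IsProbabilityMeasure (μs n)) → (∀ n, IsProbabilityMeasure (νs n)) →
      IsTightSeq μs → (⨆ n, renyiEntropy N' (μs n) (νs n)) < ∞ → IsTightSeq νs) :=
  renyiEntropy_uniform_absolute_continuity_general N' ε E hN' hε
end

section
/- Let N' < 0, let μ, ν be Borel probability measures on a complete separable metric space X, and let B_n be a sequence of Borel sets with ν(B_n) > 0 for all n and ν(B_n) → 1. Then the conditioned measures ν_{B_n} converge to ν weakly, and S_{N',μ}(ν_{B_n}) → S_{N',μ}(ν) as n → ∞, where the convergence of entropies is in the extended sense in [1,∞]. -/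
open MeasureTheory ENNReal Filter Topology Set

/-!
Conditioning on `B` rescales `ν` by `ν(B)⁻¹ → 1` and discards the mass of `Bᶜ`, which tends
to `0`; for integrable test functions the discarded part vanishes by absolute continuity of the
integral. If `ν = ρ μ`, then `ν_B = ν(B)⁻¹ 1_B ρ μ`, so
`S_{N',μ}(ν_B) = ν(B)^{-(1-1/N')} ∫_B ρ^{-1/N'} dν`, and `∫_B g dν → ∫ g dν` for every
nonnegative `g`, even when the limit is infinite, by truncating `g`. If `ν` is not `≪ μ`, a
`μ`-null set charged by `ν` is eventually charged by `ν_B`, so all the entropies are `∞`.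
-/

open MeasureTheory Filter Set ENNReal Topology

section ConditionedMeasure

variable {X ι : Type*} [MeasurableSpace X] {μ ν : Measure X} {B : ι → Set X} {l : Filter ι}

lemma tendsto_measure_compl_nhds_zero [IsProbabilityMeasure ν] (hB : ∀ i, MeasurableSet (B i))
    (h : Tendsto (fun i => ν (B i)) l (𝓝 1)) : Tendsto (fun i => ν (B i)ᶜ) l (𝓝 0) := by
  simp_rw [prob_compl_eq_one_sub (hB _)]
  simpa using ENNReal.Tendsto.sub tendsto_const_nhds h (Or.inl one_ne_top)

lemma tendsto_setLIntegral_of_lintegral_ne_top {g : X → ℝ≥0∞} (hg : ∫⁻ x, g x ∂ν ≠ ∞)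
    (hB : ∀ i, MeasurableSet (B i)) (h : Tendsto (fun i => ν (B i)ᶜ) l (𝓝 0)) :
    Tendsto (fun i => ∫⁻ x in B i, g x ∂ν) l (𝓝 (∫⁻ x, g x ∂ν)) := by
  have hsplit : ∀ i, ∫⁻ x in B i, g x ∂ν = ∫⁻ x, g x ∂ν - ∫⁻ x in (B i)ᶜ, g x ∂ν := fun i =>
    ENNReal.eq_sub_of_add_eq (ne_top_of_le_ne_top hg (setLIntegral_le_lintegral _ _))
      (lintegral_add_compl g (hB i))
  simp_rw [hsplit]
  simpa using ENNReal.Tendsto.sub tendsto_const_nhds (tendsto_setLIntegral_zero hg h) (Or.inl hg)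

lemma tendsto_setLIntegral_of_tendsto_measure_compl [IsFiniteMeasure ν] {g : X → ℝ≥0∞}
    (hg : Measurable g) (hB : ∀ i, MeasurableSet (B i))
    (h : Tendsto (fun i => ν (B i)ᶜ) l (𝓝 0)) :
    Tendsto (fun i => ∫⁻ x in B i, g x ∂ν) l (𝓝 (∫⁻ x, g x ∂ν)) := by
  have htrunc : ∫⁻ x, g x ∂ν = ⨆ M : ℕ, ∫⁻ x, min (g x) M ∂ν := by
    rw [← lintegral_iSup (fun M => hg.min measurable_const)
      (fun M M' hM x => min_le_min le_rfl (by exact_mod_cast hM))]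
    congr with x
    rw [← inf_iSup_eq, ENNReal.iSup_natCast, inf_top_eq]
  refine tendsto_order.2 ⟨fun a ha => ?_, fun b hb => Eventually.of_forall fun i =>
    (setLIntegral_le_lintegral _ _).trans_lt hb⟩
  obtain ⟨M, hM⟩ := lt_iSup_iff.1 (htrunc ▸ ha)
  have hfin : ∫⁻ x, min (g x) M ∂ν ≠ ∞ :=
    ne_top_of_le_ne_top (lintegral_const_lt_top (natCast_ne_top M)).ne
      (lintegral_mono fun x => min_le_right _ _)
  filter_upwards [(tendsto_setLIntegral_of_lintegral_ne_top hfin hB h).eventually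
    (lt_mem_nhds hM)] with i hi
  exact hi.trans_le (lintegral_mono fun x => min_le_left _ _)

lemma tendsto_integral_condProb [IsProbabilityMeasure ν] {f : X → ℝ} (hf : Integrable f ν)
    (hB : ∀ i, MeasurableSet (B i)) (h : Tendsto (fun i => ν (B i)) l (𝓝 1)) :
    Tendsto (fun i => ∫ x, f x ∂condProb ν (B i)) l (𝓝 (∫ x, f x ∂ν)) := by
  have hcompl := hf.tendsto_setIntegral_nhds_zero (tendsto_measure_compl_nhds_zero hB h)
  have hset : Tendsto (fun i => ∫ x in B i, f x ∂ν) l (𝓝 (∫ x, f x ∂ν)) := by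
    have hsplit : ∀ i, ∫ x in B i, f x ∂ν = ∫ x, f x ∂ν - ∫ x in (B i)ᶜ, f x ∂ν := fun i =>
      eq_sub_of_add_eq (integral_add_compl (hB i) hf)
    simp_rw [hsplit]
    simpa using tendsto_const_nhds.sub hcompl
  have hinv : Tendsto (fun i => (ν (B i)).toReal⁻¹) l (𝓝 1) := by
    simpa using ((ENNReal.tendsto_toReal one_ne_top).comp h).inv₀ one_ne_zero
  simpa [condProb, integral_smul_measure] using hinv.mul hset

lemma eventually_not_absolutelyContinuous_condProb [IsFiniteMeasure ν] (hνμ : ¬ ν ≪ μ)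
    (hB : ∀ i, MeasurableSet (B i)) (h : Tendsto (fun i => ν (B i)ᶜ) l (𝓝 0)) :
    ∀ᶠ i in l, ¬ condProb ν (B i) ≪ μ := by
  obtain ⟨s, hμs, hνs⟩ : ∃ s, μ s = 0 ∧ ν s ≠ 0 := by
    by_contra! hs
    exact hνμ fun s => hs s
  filter_upwards [h.eventually (gt_mem_nhds (pos_iff_ne_zero.2 hνs))] with i hi hac
  have hinter : ν (s ∩ B i) = 0 := by
    have := hac hμs
    rw [condProb, Measure.smul_apply, Measure.restrict_apply' (hB i), smul_eq_mul,
      mul_eq_zero] at this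
    exact this.resolve_left (ENNReal.inv_ne_zero.2 (measure_ne_top ν _))
  have hle : ν s ≤ ν (B i)ᶜ := calc
    ν s ≤ ν (s ∩ B i) + ν (s \ B i) := measure_le_inter_add_sdiff ν s (B i)
    _ ≤ 0 + ν (B i)ᶜ := by rw [hinter]; gcongr; exact sdiff_subset_compl _ _
    _ = ν (B i)ᶜ := zero_add _
  exact hi.not_ge hle

end ConditionedMeasure

section RenyiEntropy

variable {X : Type*} [MeasurableSpace X] {μ ν : Measure X}

lemma lintegral_rnDeriv_smul_restrict_rpow [IsFiniteMeasure ν] [SigmaFinite μ] {c : ℝ≥0∞}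
    (hc : c ≠ ∞) {s : Set X} (hs : MeasurableSet s) {p : ℝ} (hp : 0 < p) :
    ∫⁻ x, ((c • ν.restrict s).rnDeriv μ x) ^ p ∂μ = c ^ p * ∫⁻ x in s, ν.rnDeriv μ x ^ p ∂μ := by
  calc ∫⁻ x, ((c • ν.restrict s).rnDeriv μ x) ^ p ∂μ
      = ∫⁻ x, (c * s.indicator (ν.rnDeriv μ) x) ^ p ∂μ := by
        refine lintegral_congr_ae ?_
        filter_upwards [Measure.rnDeriv_smul_left_of_ne_top (ν.restrict s) μ hc,
          Measure.rnDeriv_restrict ν μ hs] with x hsmul hrestrict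
        rw [hsmul, Pi.smul_apply, hrestrict, smul_eq_mul]
    _ = ∫⁻ x, c ^ p * s.indicator (fun x => ν.rnDeriv μ x ^ p) x ∂μ := by
        congr with x
        by_cases hx : x ∈ s <;> simp [hx, ENNReal.mul_rpow_of_nonneg _ _ hp.le,
          ENNReal.zero_rpow_of_pos hp]
    _ = c ^ p * ∫⁻ x in s, ν.rnDeriv μ x ^ p ∂μ := by
        rw [lintegral_const_mul' _ _ (ENNReal.rpow_ne_top_of_nonneg hp.le hc),
          lintegral_indicator hs]

lemma setLIntegral_rnDeriv_rpow [IsFiniteMeasure ν] [SigmaFinite μ] (hνμ : ν ≪ μ) {s : Set X}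
    (hs : MeasurableSet s) {p : ℝ} (hp : 1 ≤ p) :
    ∫⁻ x in s, ν.rnDeriv μ x ^ p ∂μ = ∫⁻ x in s, ν.rnDeriv μ x ^ (p - 1) ∂ν := by
  rw [← setLIntegral_rnDeriv_mul hνμ
    ((Measure.measurable_rnDeriv ν μ).pow_const _).aemeasurable hs]
  congr with x
  conv_lhs => rw [← add_sub_cancel 1 p]
  rw [ENNReal.rpow_add_of_nonneg _ _ zero_le_one (sub_nonneg.2 hp), ENNReal.rpow_one]

lemma renyiEntropy_condProb [IsFiniteMeasure ν] [SigmaFinite μ] (hνμ : ν ≪ μ) {N' : ℝ}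
    (hN' : N' < 0) {s : Set X} (hs : MeasurableSet s) (hνs : ν s ≠ 0) :
    renyiEntropy N' μ (condProb ν s)
      = (ν s)⁻¹ ^ (1 - 1 / N') * ∫⁻ x in s, ν.rnDeriv μ x ^ (-(1 / N')) ∂ν := by
  have hac : condProb ν s ≪ μ := (Measure.absolutelyContinuous_restrict.trans hνμ).smul_left _
  have hp : 1 ≤ 1 - 1 / N' := (le_sub_self_iff 1).2 (one_div_nonpos.2 hN'.le)
  rw [renyiEntropy, if_pos hac, condProb,
    lintegral_rnDeriv_smul_restrict_rpow (ENNReal.inv_ne_top.2 hνs) hs (zero_lt_one.trans_le hp),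
    setLIntegral_rnDeriv_rpow hνμ hs hp, sub_sub_cancel_left]

end RenyiEntropy

open MeasureTheory Filter Set in
theorem condProb_weak_conv_and_entropy_general {X : Type*} [MetricSpace X]
    [MeasurableSpace X] [BorelSpace X]
    (N' : ℝ) (hN' : N' < 0)
    (μ ν : Measure X) [IsProbabilityMeasure μ] [IsProbabilityMeasure ν]
    (B : ℕ → Set X) (hB : ∀ n, MeasurableSet (B n))
    (hconv : Tendsto (fun n => ν (B n)) atTop (nhds 1)) :
    WeakConv (fun n => condProb ν (B n)) ν ∧
      Tendsto (fun n => renyiEntropy N' μ (condProb ν (B n))) atTop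
        (nhds (renyiEntropy N' μ ν)) := by
  have hcompl := tendsto_measure_compl_nhds_zero hB hconv
  refine ⟨fun f => tendsto_integral_condProb (f.integrable ν) hB hconv, ?_⟩
  by_cases hνμ : ν ≪ μ
  · -- `condProb ν univ = ν`
    have hentropy : renyiEntropy N' μ ν = ∫⁻ x, ν.rnDeriv μ x ^ (-(1 / N')) ∂ν := by
      simpa [condProb] using renyiEntropy_condProb hνμ hN' MeasurableSet.univ (by simp)
    have hfactor : Tendsto (fun n => (ν (B n))⁻¹ ^ (1 - 1 / N')) atTop (𝓝 1) := by
      simpa using (tendsto_inv_iff.2 hconv).ennrpow_const (1 - 1 / N')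
    have hintegral := tendsto_setLIntegral_of_tendsto_measure_compl
      ((Measure.measurable_rnDeriv ν μ).pow_const (-(1 / N'))) hB hcompl
    have hlim : Tendsto (fun n => (ν (B n))⁻¹ ^ (1 - 1 / N')
        * ∫⁻ x in B n, ν.rnDeriv μ x ^ (-(1 / N')) ∂ν) atTop (𝓝 (renyiEntropy N' μ ν)) := by
      simpa [hentropy] using
        ENNReal.Tendsto.mul hfactor (Or.inl one_ne_zero) hintegral (Or.inr one_ne_top)
    refine hlim.congr' ?_
    filter_upwards [hconv.eventually_ne one_ne_zero] with n hn
    rw [renyiEntropy_condProb hνμ hN' (hB n) hn]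
  · rw [renyiEntropy, if_neg hνμ]
    refine tendsto_const_nhds.congr' ?_
    filter_upwards [eventually_not_absolutelyContinuous_condProb hνμ hB hcompl] with n hn
    rw [renyiEntropy, if_neg hn]

open MeasureTheory Filter Set in
/-- If `ν(Bₙ) → 1` then the conditioned measures `ν_{Bₙ}` converge weakly
to `ν` and their Rényi entropies converge to that of `ν`. -/
theorem condProb_weak_conv_and_entropy {X : Type*} [MetricSpace X] [CompleteSpace X]
    [TopologicalSpace.SeparableSpace X] [MeasurableSpace X] [BorelSpace X]
    (N' : ℝ) (hN' : N' < 0)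
    (μ ν : Measure X) [IsProbabilityMeasure μ] [IsProbabilityMeasure ν]
    (B : ℕ → Set X) (hB : ∀ n, MeasurableSet (B n)) (hpos : ∀ n, 0 < ν (B n))
    (hconv : Tendsto (fun n => ν (B n)) atTop (nhds 1)) :
    WeakConv (fun n => condProb ν (B n)) ν ∧
      Tendsto (fun n => renyiEntropy N' μ (condProb ν (B n))) atTop
        (nhds (renyiEntropy N' μ ν)) :=
  condProb_weak_conv_and_entropy_general N' hN' μ ν B hB hconv
end

section
/- Let X be a complete separable metric space, μ a Borel probability measure on X, ν a Borel probability measure on X with finite second moment, and N' < 0. Let {B_j}_{j∈J} be a countable family of mutually disjoint Borel subsets of X with ν(X \ ⋃_{j∈J} B_j) = 0 and μ(B_j) > 0 for every j ∈ J. Set D := sup_{j∈J} diam B_j ∈ [0,∞] and ν̄ := Σ_{j∈J} ν(B_j)·μ_{B_j}, a Borel probability measure on X. Then there exists a coupling π of ν and ν̄ such that d_X(x,y) ≤ 2D for π-almost every (x,y) ∈ X × X (in particular W₂(ν, ν̄) ≤ 2D when D < ∞), and S_{N',μ}(ν̄) ≤ S_{N',μ}(ν). -/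
open MeasureTheory ENNReal Filter Topology Set

/-!
Split `ν` along the cells: on each cell `Bⱼ`, couple the conditioned measures `ν_{Bⱼ}` and
`μ_{Bⱼ}` independently and weight by `ν(Bⱼ)`. Both marginals of a block live on `Bⱼ`, so the
glued coupling moves points by at most `diam Bⱼ`. The density of `ν̄` is the cell average
`ν(Bⱼ)/μ(Bⱼ)` of `ρ = dν/dμ` on `Bⱼ`, and since `1 - 1/N' > 1`, Jensen's inequality on each
cell bounds `∫_{Bⱼ} ρ̄^{1-1/N'} dμ` by `∫_{Bⱼ} ρ^{1-1/N'} dμ`.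
-/

open MeasureTheory Set

theorem rpow_lintegral_le_lintegral_rpow {Y : Type*} [MeasurableSpace Y] (P : Measure Y)
    [IsProbabilityMeasure P] {f : Y → ℝ≥0∞} (hf : AEMeasurable f P) {e : ℝ} (he : 1 ≤ e) :
    (∫⁻ x, f x ∂P) ^ e ≤ ∫⁻ x, f x ^ e ∂P := by
  rcases he.eq_or_lt with rfl | he
  · simp
  -- Hölder's inequality against the constant function `1`
  have h := ENNReal.lintegral_mul_le_Lp_mul_Lq P (.conjExponent he) hf
    (aemeasurable_const (b := (1 : ℝ≥0∞)))
  simp only [Pi.mul_apply, mul_one, ENNReal.one_rpow, lintegral_one, measure_univ] at h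
  calc (∫⁻ x, f x ∂P) ^ e ≤ ((∫⁻ x, f x ^ e ∂P) ^ (1 / e)) ^ e := by gcongr
    _ = ∫⁻ x, f x ^ e ∂P := by
      rw [← ENNReal.rpow_mul, one_div_mul_cancel (by positivity), ENNReal.rpow_one]

section condProb

variable {X : Type*} [MeasurableSpace X] {κ : Measure X} {B : Set X}

instance [SFinite κ] : SFinite (condProb κ B) := by
  rw [condProb]
  infer_instance

theorem isProbabilityMeasure_condProb [IsFiniteMeasure κ] (h : κ B ≠ 0) :
    IsProbabilityMeasure (condProb κ B) :=
  ⟨by simp [condProb, ENNReal.inv_mul_cancel h (measure_ne_top κ B)]⟩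

theorem smul_condProb_self [IsFiniteMeasure κ] : κ B • condProb κ B = κ.restrict B := by
  by_cases h : κ B = 0
  · simp [h, Measure.restrict_eq_zero.mpr h]
  · rw [condProb, smul_smul, ENNReal.mul_inv_cancel h (measure_ne_top κ B), one_smul]

theorem ae_mem_condProb (hB : MeasurableSet B) : ∀ᵐ x ∂condProb κ B, x ∈ B :=
  Measure.ae_smul_measure (ae_restrict_mem hB) _

theorem lintegral_condProb (f : X → ℝ≥0∞) :
    ∫⁻ x, f x ∂condProb κ B = (κ B)⁻¹ * ∫⁻ x in B, f x ∂κ := by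
  rw [condProb, lintegral_smul_measure, smul_eq_mul]

theorem rpow_setLIntegral_div_mul_le [IsFiniteMeasure κ] (hB : κ B ≠ 0) {f : X → ℝ≥0∞}
    (hf : Measurable f) {e : ℝ} (he : 1 ≤ e) :
    ((∫⁻ x in B, f x ∂κ) / κ B) ^ e * κ B ≤ ∫⁻ x in B, f x ^ e ∂κ := by
  have := isProbabilityMeasure_condProb hB
  have hJensen := rpow_lintegral_le_lintegral_rpow (condProb κ B) hf.aemeasurable he
  rw [lintegral_condProb, lintegral_condProb] at hJensen
  calc ((∫⁻ x in B, f x ∂κ) / κ B) ^ e * κ B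
      = ((κ B)⁻¹ * ∫⁻ x in B, f x ∂κ) ^ e * κ B := by rw [ENNReal.div_eq_inv_mul]
    _ ≤ ((κ B)⁻¹ * ∫⁻ x in B, f x ^ e ∂κ) * κ B := by gcongr
    _ = ∫⁻ x in B, f x ^ e ∂κ := by
      rw [mul_comm, ← mul_assoc, ENNReal.mul_inv_cancel hB (measure_ne_top κ B), one_mul]

end condProb

noncomputable section Discretization

variable {X : Type*} [MeasurableSpace X] {J : Type*} (μ ν : Measure X) (B : J → Set X)

def discretization : Measure X :=
  Measure.sum fun j => ν (B j) • condProb μ (B j)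

def discretizationCoupling : Measure (X × X) :=
  Measure.sum fun j => ν (B j) • (condProb ν (B j)).prod (condProb μ (B j))

def discretizationDensity (x : X) : ℝ≥0∞ :=
  ∑' j, (B j).indicator (fun _ => ν (B j) / μ (B j)) x

variable {μ ν B}

theorem map_fst_discretizationCoupling [Countable J] [IsFiniteMeasure μ] [IsFiniteMeasure ν]
    (hmeas : ∀ j, MeasurableSet (B j)) (hdisj : Pairwise (Function.onFun Disjoint B))
    (hcover : ν (⋃ j, B j)ᶜ = 0) (hpos : ∀ j, μ (B j) ≠ 0) :
    (discretizationCoupling μ ν B).map Prod.fst = ν := by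
  have hblock : ∀ j, (ν (B j) • (condProb ν (B j)).prod (condProb μ (B j))).map Prod.fst =
      ν.restrict (B j) := fun j => by
    have := isProbabilityMeasure_condProb (hpos j)
    rw [Measure.map_smul, Measure.map_fst_prod, measure_univ, one_smul, smul_condProb_self]
  rw [discretizationCoupling, Measure.map_sum measurable_fst.aemeasurable, funext hblock,
    ← Measure.restrict_iUnion hdisj hmeas]
  exact Measure.restrict_eq_self_of_ae_mem (mem_ae_iff.mpr hcover)

theorem map_snd_discretizationCoupling [SFinite μ] [IsFiniteMeasure ν] :
    (discretizationCoupling μ ν B).map Prod.snd = discretization μ ν B := by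
  rw [discretizationCoupling, Measure.map_sum measurable_snd.aemeasurable, discretization]
  congr! 2 with j
  rw [Measure.map_smul, Measure.map_snd_prod, smul_smul, ← smul_eq_mul, ← Measure.smul_apply,
    smul_condProb_self, Measure.restrict_apply_univ]

theorem discretizationDensity_eq_of_mem (hdisj : Pairwise (Function.onFun Disjoint B)) {j : J}
    {x : X} (hx : x ∈ B j) : discretizationDensity μ ν B x = ν (B j) / μ (B j) := by
  rw [discretizationDensity, tsum_eq_single j fun i hi =>
    indicator_of_notMem (fun hxi => disjoint_left.mp (hdisj hi) hxi hx) _]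
  exact indicator_of_mem hx _

theorem discretizationDensity_eq_zero_of_notMem {x : X} (hx : x ∉ ⋃ j, B j) :
    discretizationDensity μ ν B x = 0 :=
  ENNReal.tsum_eq_zero.mpr fun j =>
    indicator_of_notMem (fun hxj => hx (mem_iUnion_of_mem j hxj)) _

theorem measurable_discretizationDensity [Countable J] (hmeas : ∀ j, MeasurableSet (B j)) :
    Measurable (discretizationDensity μ ν B) :=
  Measurable.tsum fun j => measurable_const.indicator (hmeas j)

theorem discretization_eq_withDensity [Countable J] (hmeas : ∀ j, MeasurableSet (B j)) :
    discretization μ ν B = μ.withDensity (discretizationDensity μ ν B) := by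
  have hdensity : discretizationDensity μ ν B =
      ∑' j, (B j).indicator fun _ => ν (B j) / μ (B j) := by
    funext x
    exact ENNReal.tsum_apply.symm
  rw [hdensity, withDensity_tsum fun j => measurable_const.indicator (hmeas j), discretization]
  congr! 2 with j
  rw [withDensity_indicator (hmeas j), withDensity_const, condProb, smul_smul, div_eq_mul_inv]

theorem renyiEntropy_discretization_le [Countable J] [IsFiniteMeasure μ] [IsFiniteMeasure ν]
    {N' : ℝ} (hN' : N' < 0) (hmeas : ∀ j, MeasurableSet (B j))
    (hdisj : Pairwise (Function.onFun Disjoint B)) (hpos : ∀ j, μ (B j) ≠ 0) :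
    renyiEntropy N' μ (discretization μ ν B) ≤ renyiEntropy N' μ ν := by
  by_cases hac : ν ≪ μ
  swap
  · simp [renyiEntropy, hac]
  set e : ℝ := 1 - 1 / N'
  have he : 1 ≤ e := by
    have : 1 / N' < 0 := one_div_neg.mpr hN'
    linarith
  set ρ := ν.rnDeriv μ
  set ρbar := discretizationDensity μ ν B
  have hρbar : Measurable ρbar := measurable_discretizationDensity hmeas
  have hsupport : (fun x => ρbar x ^ e).support ⊆ ⋃ j, B j := fun x hx => by
    by_contra hxU
    exact hx (by simp [ρbar, discretizationDensity_eq_zero_of_notMem hxU,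
      ENNReal.zero_rpow_of_pos (by linarith : (0 : ℝ) < e)])
  have hcell : ∀ j, ∫⁻ x in B j, ρbar x ^ e ∂μ ≤ ∫⁻ x in B j, ρ x ^ e ∂μ := fun j => by
    calc ∫⁻ x in B j, ρbar x ^ e ∂μ = (ν (B j) / μ (B j)) ^ e * μ (B j) := by
          rw [setLIntegral_congr_fun (hmeas j) fun x hx =>
            congrArg (· ^ e) (discretizationDensity_eq_of_mem hdisj hx), setLIntegral_const]
      _ = ((∫⁻ x in B j, ρ x ∂μ) / μ (B j)) ^ e * μ (B j) := by
          rw [Measure.setLIntegral_rnDeriv' hac (hmeas j)]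
      _ ≤ ∫⁻ x in B j, ρ x ^ e ∂μ :=
          rpow_setLIntegral_div_mul_le (hpos j) (Measure.measurable_rnDeriv ν μ) he
  rw [renyiEntropy, renyiEntropy, if_pos hac, discretization_eq_withDensity hmeas,
    if_pos (withDensity_absolutelyContinuous _ _),
    lintegral_congr_ae ((Measure.rnDeriv_withDensity μ hρbar).mono fun x hx => by rw [hx])]
  calc ∫⁻ x, ρbar x ^ e ∂μ = ∫⁻ x in ⋃ j, B j, ρbar x ^ e ∂μ :=
        (setLIntegral_eq_of_support_subset hsupport).symm
    _ = ∑' j, ∫⁻ x in B j, ρbar x ^ e ∂μ := lintegral_iUnion hmeas hdisj _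
    _ ≤ ∑' j, ∫⁻ x in B j, ρ x ^ e ∂μ := ENNReal.tsum_le_tsum hcell
    _ = ∫⁻ x in ⋃ j, B j, ρ x ^ e ∂μ := (lintegral_iUnion hmeas hdisj _).symm
    _ ≤ ∫⁻ x, ρ x ^ e ∂μ := setLIntegral_le_lintegral _ _

end Discretization

theorem ae_edist_le_iSup_diam_discretizationCoupling {X : Type*} [PseudoEMetricSpace X]
    [MeasurableSpace X] {J : Type*} [Countable J] {μ ν : Measure X} {B : J → Set X}
    (hmeas : ∀ j, MeasurableSet (B j)) :
    ∀ᵐ p ∂discretizationCoupling μ ν B, edist p.1 p.2 ≤ ⨆ j, Metric.ediam (B j) := by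
  rw [discretizationCoupling, Measure.ae_sum_iff]
  intro j
  refine Measure.ae_smul_measure ?_ _
  filter_upwards [Measure.quasiMeasurePreserving_fst.ae (ae_mem_condProb (hmeas j)),
    Measure.quasiMeasurePreserving_snd.ae (ae_mem_condProb (hmeas j))] with p hp₁ hp₂
  exact (Metric.edist_le_ediam_of_mem hp₁ hp₂).trans (le_iSup (fun j => Metric.ediam (B j)) j)

theorem discretization_coupling_and_entropy_general {X : Type*} [MetricSpace X] [MeasurableSpace X]
    (N' : ℝ) (hN' : N' < 0)
    (μ ν : Measure X) [IsProbabilityMeasure μ] [IsProbabilityMeasure ν]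
    {J : Type} [Countable J] (B : J → Set X)
    (hmeas : ∀ j, MeasurableSet (B j)) (hdisj : Pairwise (Function.onFun Disjoint B))
    (hcover : ν (⋃ j, B j)ᶜ = 0) (hpos : ∀ j, 0 < μ (B j)) :
    (∃ π : Measure (X × X),
      IsCoupling π ν (Measure.sum fun j => ν (B j) • condProb μ (B j)) ∧
      ∀ᵐ p ∂π, edist p.1 p.2 ≤ 2 * ⨆ j, EMetric.diam (B j)) ∧
    renyiEntropy N' μ (Measure.sum fun j => ν (B j) • condProb μ (B j)) ≤
      renyiEntropy N' μ ν := by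
  have hpos' : ∀ j, μ (B j) ≠ 0 := fun j => (hpos j).ne'
  refine ⟨⟨discretizationCoupling μ ν B,
    ⟨map_fst_discretizationCoupling hmeas hdisj hcover hpos', map_snd_discretizationCoupling⟩,
    ?_⟩, renyiEntropy_discretization_le hN' hmeas hdisj hpos'⟩
  filter_upwards [ae_edist_le_iSup_diam_discretizationCoupling hmeas] with p hp
  exact hp.trans (le_mul_of_one_le_left' one_le_two)

open MeasureTheory Set in
/-- Discretization of a measure along a countable disjoint family: the
discretized measure `ν̄ = Σⱼ ν(Bⱼ)·μ_{Bⱼ}` admits a coupling with `ν` moving points at most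
`2·sup diam Bⱼ`, and has smaller Rényi entropy. -/
theorem discretization_coupling_and_entropy {X : Type*} [MetricSpace X] [CompleteSpace X]
    [TopologicalSpace.SeparableSpace X] [MeasurableSpace X] [BorelSpace X]
    (N' : ℝ) (hN' : N' < 0)
    (μ ν : Measure X) [IsProbabilityMeasure μ] [IsProbabilityMeasure ν]
    (hν2 : HasFiniteSecondMoment ν)
    {J : Type} [Countable J] (B : J → Set X)
    (hmeas : ∀ j, MeasurableSet (B j)) (hdisj : Pairwise (Function.onFun Disjoint B))
    (hcover : ν (⋃ j, B j)ᶜ = 0) (hpos : ∀ j, 0 < μ (B j)) :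
    (∃ π : Measure (X × X),
      IsCoupling π ν (Measure.sum fun j => ν (B j) • condProb μ (B j)) ∧
      ∀ᵐ p ∂π, edist p.1 p.2 ≤ 2 * ⨆ j, EMetric.diam (B j)) ∧
    renyiEntropy N' μ (Measure.sum fun j => ν (B j) • condProb μ (B j)) ≤
      renyiEntropy N' μ ν :=
  discretization_coupling_and_entropy_general N' hN' μ ν B hmeas hdisj hcover hpos
end

section
/- Let X be a complete separable metric space and N' < 0. Let μ be a Borel probability measure on X and let ν_n = ρ_n μ and ν = ρμ be Borel probability measures absolutely continuous with respect to μ. If ν_n → ν weakly and limsup_{n→∞} S_{N',μ}(ν_n) ≤ S_{N',μ}(ν) < ∞, then ∫_X |ρ_n − ρ| dμ → 0 as n → ∞. -/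
open MeasureTheory ENNReal Filter Topology Set

/-!
With `p = 1 - 1/N' > 1` the entropy of `ρ μ` is `∫ ρ^p dμ`. Weak convergence of `ρₙ μ` together
with an eventual `Lᵖ` bound on `ρₙ` gives `∫ f ρₙ dμ → ∫ f ρ dμ` for every `f ∈ L^q`, since bounded
continuous functions are dense in `L^q`. Testing with `f = ρ^(p-1)` and using
`limsup ∫ ρₙ^p ≤ ∫ ρ^p` shows that the Bregman divergence `ρₙ^p - ρ^p - p ρ^(p-1) (ρₙ - ρ)` of
`t ↦ t^p` tends to `0` in `L¹`. By strict convexity this divergence is bounded below on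
`{ρ ≤ M, ρₙ ≤ ρ - ε}`, which controls `∫ (ρ - ρₙ)⁺`; as both are probability densities,
`∫ |ρₙ - ρ| = 2 ∫ (ρ - ρₙ)⁺`.
-/

open BoundedContinuousFunction Real

lemma Real.rpow_sub_one_mul_self {x : ℝ} (hx : 0 ≤ x) {p : ℝ} (hp : p ≠ 0) :
    x ^ (p - 1) * x = x ^ p := by
  rw [← rpow_add_one' hx (by simpa using hp), sub_add_cancel]

noncomputable def rpowBregman (p a b : ℝ) : ℝ := a ^ p - b ^ p - p * b ^ (p - 1) * (a - b)

section rpowBregman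

variable {p : ℝ}

lemma rpowBregman_eq_sub {a b : ℝ} (hp : p ≠ 0) (hb : 0 ≤ b) :
    rpowBregman p a b = (a ^ p - b ^ p) - p * (b ^ (p - 1) * a - b ^ p) := by
  rw [rpowBregman, ← rpow_sub_one_mul_self hb hp]
  ring

lemma rpowBregman_eq_mul {a b : ℝ} (ha : 0 ≤ a) (hb : 0 < b) :
    rpowBregman p a b = b ^ p * ((1 + (a / b - 1)) ^ p - 1 - p * (a / b - 1)) := by
  rw [rpowBregman, add_sub_cancel, div_rpow ha hb.le, rpow_sub_one hb.ne']
  field_simp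

lemma rpowBregman_nonneg (hp : 1 ≤ p) {a b : ℝ} (ha : 0 ≤ a) (hb : 0 ≤ b) :
    0 ≤ rpowBregman p a b := by
  rcases hb.eq_or_lt with rfl | hb
  · rcases hp.eq_or_lt with rfl | hp
    · simp [rpowBregman]
    · simp [rpowBregman, zero_rpow (by linarith : p ≠ 0), zero_rpow (by linarith : p - 1 ≠ 0),
        rpow_nonneg ha]
  rw [rpowBregman_eq_mul ha hb]
  have := one_add_mul_self_le_rpow_one_add (by linarith [div_nonneg ha hb.le] : -1 ≤ a / b - 1) hp
  have := rpow_nonneg hb.le p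
  nlinarith

lemma rpowBregman_pos (hp : 1 < p) {a b : ℝ} (ha : 0 ≤ a) (hab : a < b) :
    0 < rpowBregman p a b := by
  have hb : 0 < b := ha.trans_lt hab
  rw [rpowBregman_eq_mul ha hb]
  have hs : a / b - 1 ≠ 0 := by
    rw [sub_ne_zero, Ne, div_eq_one_iff_eq hb.ne']
    exact hab.ne
  have := one_add_mul_self_lt_rpow_one_add
    (by linarith [div_nonneg ha hb.le] : -1 ≤ a / b - 1) hs hp
  exact mul_pos (rpow_pos_of_pos hb p) (by linarith)

lemma continuous_rpowBregman (hp : 1 ≤ p) :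
    Continuous fun z : ℝ × ℝ => rpowBregman p z.1 z.2 := by
  have := continuous_rpow_const (by linarith : (0:ℝ) ≤ p)
  have := continuous_rpow_const (by linarith : (0:ℝ) ≤ p - 1)
  unfold rpowBregman
  fun_prop

lemma exists_pos_le_rpowBregman (hp : 1 < p) {ε : ℝ} (hε : 0 < ε) (M : ℝ) :
    ∃ η > 0, ∀ a b, 0 ≤ a → b ≤ M → a + ε ≤ b → η ≤ rpowBregman p a b := by
  let K : Set (ℝ × ℝ) := (Icc 0 M ×ˢ Icc 0 M) ∩ {z | z.1 + ε ≤ z.2}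
  have hK : IsCompact K := (isCompact_Icc.prod isCompact_Icc).inter_right
    (isClosed_le (by fun_prop) (by fun_prop))
  obtain ⟨η, hη, hηK⟩ := hK.exists_forall_le' (continuous_rpowBregman hp.le).continuousOn
    fun z hz => rpowBregman_pos hp hz.1.1.1 (by linarith [hz.2.out])
  refine ⟨η, hη, fun a b ha hbM hab => hηK (a, b) ⟨⟨⟨ha, ?_⟩, ⟨?_, hbM⟩⟩, hab⟩⟩
  all_goals simp only; linarith

-- The three terms bound `(b - a)⁺` in the cases `b - a < ε`, `a + ε ≤ b ≤ M` and `M < b`.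
lemma exists_posPart_sub_le_rpowBregman (hp : 1 < p) {ε M : ℝ} (hε : 0 < ε) (hM : 0 < M) :
    ∃ C, ∀ a b, 0 ≤ a → 0 ≤ b →
      max (b - a) 0 ≤ ε + b ^ p / M ^ (p - 1) + C * rpowBregman p a b := by
  obtain ⟨η, hη, hgap⟩ := exists_pos_le_rpowBregman hp hε M
  refine ⟨M / η, fun a b ha hb => ?_⟩
  have hMp := rpow_pos_of_pos hM (p - 1)
  have htail : 0 ≤ b ^ p / M ^ (p - 1) := div_nonneg (rpow_nonneg hb p) hMp.le
  have hCB : 0 ≤ M / η * rpowBregman p a b :=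
    mul_nonneg (div_nonneg hM.le hη.le) (rpowBregman_nonneg hp.le ha hb)
  rcases le_or_gt b M with hbM | hMb
  · rcases le_or_gt (a + ε) b with hab | hab
    · have : M ≤ M / η * rpowBregman p a b := by
        rw [div_mul_eq_mul_div, le_div_iff₀ hη]
        exact mul_le_mul_of_nonneg_left (hgap a b ha hbM hab) hM.le
      have : max (b - a) 0 ≤ M := max_le (by linarith) hM.le
      linarith
    · have : max (b - a) 0 ≤ ε := max_le (by linarith) hε.le
      linarith
  · have : b ≤ b ^ p / M ^ (p - 1) := by
      rw [le_div_iff₀ hMp]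
      calc b * M ^ (p - 1) ≤ b * b ^ (p - 1) := by gcongr
        _ = b ^ p := by rw [mul_comm, rpow_sub_one_mul_self hb (by linarith)]
    have : max (b - a) 0 ≤ b := max_le (by linarith) hb
    linarith

end rpowBregman

section Lp

variable {X : Type*} [MeasurableSpace X] {μ : Measure X}

lemma integral_withDensity_ofReal {g : X → ℝ} (hg : Measurable g) (hg0 : ∀ x, 0 ≤ g x)
    (h : X → ℝ) :
    ∫ x, h x ∂μ.withDensity (fun x => ENNReal.ofReal (g x)) = ∫ x, h x * g x ∂μ := by
  rw [integral_withDensity_eq_integral_toReal_smul hg.ennreal_ofReal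
    (ae_of_all _ fun _ => ofReal_lt_top)]
  simp only [toReal_ofReal (hg0 _), smul_eq_mul, mul_comm]

lemma integral_eq_one_of_isProbabilityMeasure_withDensity {g : X → ℝ} (hg : Measurable g)
    (hg0 : ∀ x, 0 ≤ g x) [IsProbabilityMeasure (μ.withDensity fun x => ENNReal.ofReal (g x))] :
    ∫ x, g x ∂μ = 1 := by
  simpa using (integral_withDensity_ofReal (μ := μ) hg hg0 1).symm

lemma integrable_of_isFiniteMeasure_withDensity {g : X → ℝ} (hg : Measurable g)
    (hg0 : ∀ x, 0 ≤ g x) [IsFiniteMeasure (μ.withDensity fun x => ENNReal.ofReal (g x))] :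
    Integrable g μ := by
  refine ⟨hg.aestronglyMeasurable, (hasFiniteIntegral_iff_ofReal (ae_of_all _ hg0)).2 ?_⟩
  simpa [withDensity_apply] using measure_lt_top (μ.withDensity fun x => ENNReal.ofReal (g x)) univ

lemma eLpNorm_ofReal_eq_lintegral {p : ℝ} (hp : 0 < p) {g : X → ℝ} (hg0 : ∀ x, 0 ≤ g x) :
    eLpNorm g (ENNReal.ofReal p) μ = (∫⁻ x, ENNReal.ofReal (g x) ^ p ∂μ) ^ (1 / p) := by
  rw [eLpNorm_eq_lintegral_rpow_enorm_toReal (by simpa using hp) ofReal_ne_top,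
    toReal_ofReal hp.le]
  simp only [Real.enorm_eq_ofReal_abs, abs_of_nonneg (hg0 _)]

lemma memLp_ofReal_of_lintegral_lt_top {p : ℝ} (hp : 0 < p) {g : X → ℝ}
    (hg : AEStronglyMeasurable g μ) (hg0 : ∀ x, 0 ≤ g x)
    (hfin : ∫⁻ x, ENNReal.ofReal (g x) ^ p ∂μ < ∞) : MemLp g (ENNReal.ofReal p) μ := by
  refine ⟨hg, ?_⟩
  rw [eLpNorm_ofReal_eq_lintegral hp hg0]
  exact rpow_lt_top_of_nonneg (by positivity) hfin.ne

lemma integral_rpow_eq_toReal_lintegral {p : ℝ} (hp : 0 ≤ p) {g : X → ℝ}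
    (hg : AEStronglyMeasurable g μ) (hg0 : ∀ x, 0 ≤ g x) :
    ∫ x, g x ^ p ∂μ = (∫⁻ x, ENNReal.ofReal (g x) ^ p ∂μ).toReal := by
  rw [integral_eq_lintegral_of_nonneg_ae (ae_of_all _ fun x => rpow_nonneg (hg0 x) p)
    (hg.aemeasurable.pow_const p).aestronglyMeasurable]
  simp only [ofReal_rpow_of_nonneg (hg0 _) hp]

lemma MeasureTheory.MemLp.integrable_rpow {p : ℝ} (hp : 0 < p) {g : X → ℝ}
    (hg : MemLp g (ENNReal.ofReal p) μ) (hg0 : ∀ x, 0 ≤ g x) :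
    Integrable (fun x => g x ^ p) μ := by
  have := hg.integrable_norm_rpow (by simpa using hp) ofReal_ne_top
  simpa only [toReal_ofReal hp.le, Real.norm_of_nonneg (hg0 _)] using this

lemma MeasureTheory.MemLp.rpow_sub_one {p : ℝ} (hp : 1 < p) {g : X → ℝ}
    (hg : MemLp g (ENNReal.ofReal p) μ) (hg0 : ∀ x, 0 ≤ g x) :
    MemLp (fun x => g x ^ (p - 1)) (ENNReal.ofReal p.conjExponent) μ := by
  have := (memLp_norm_rpow_iff hg.1 (q := ENNReal.ofReal (p - 1)) (by simpa using hp)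
    ofReal_ne_top).2 hg
  rw [toReal_ofReal (by linarith), ← ofReal_div_of_pos (by linarith)] at this
  simpa only [Real.norm_of_nonneg (hg0 _), Real.conjExponent] using this

lemma MeasureTheory.MemLp.integrable_rpow_sub_one_mul {p : ℝ} (hp : 1 < p) {f g : X → ℝ}
    (hf : MemLp f (ENNReal.ofReal p) μ) (hg : MemLp g (ENNReal.ofReal p) μ)
    (hg0 : ∀ x, 0 ≤ g x) : Integrable (fun x => g x ^ (p - 1) * f x) μ := by
  have := (Real.HolderConjugate.conjExponent hp).symm.ennrealOfReal
  exact (hg.rpow_sub_one hp hg0).integrable_mul hf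

lemma abs_integral_mul_le_toReal_eLpNorm_mul {p q : ℝ≥0∞} [p.HolderConjugate q] {f g : X → ℝ}
    (hf : MemLp f p μ) (hg : MemLp g q μ) :
    |∫ x, f x * g x ∂μ| ≤ (eLpNorm f p μ).toReal * (eLpNorm g q μ).toReal := by
  calc |∫ x, f x * g x ∂μ| ≤ ∫ x, ‖f x * g x‖ ∂μ := abs_integral_le_integral_abs
    _ = (eLpNorm (f * g) 1 μ).toReal := by
      rw [eLpNorm_one_eq_lintegral_enorm]
      exact integral_norm_eq_lintegral_enorm (hf.1.mul hg.1)
    _ ≤ (eLpNorm f p μ * eLpNorm g q μ).toReal := by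
      refine toReal_mono (mul_ne_top hf.eLpNorm_ne_top hg.eLpNorm_ne_top) ?_
      exact eLpNorm_smul_le_mul_eLpNorm (r := 1) (φ := f) hg.1 hf.1
    _ = _ := toReal_mul

theorem tendsto_integral_mul_of_forall_boundedContinuous [TopologicalSpace X] [NormalSpace X]
    [BorelSpace X] [μ.WeaklyRegular] {p q : ℝ≥0∞} [p.HolderConjugate q] (hq : q ≠ ∞)
    {gs : ℕ → X → ℝ} {g : X → ℝ} {C : ℝ≥0∞} (hC : C ≠ ∞)
    (hgs : ∀ n, AEStronglyMeasurable (gs n) μ) (hbdd : ∀ᶠ n in atTop, eLpNorm (gs n) p μ ≤ C)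
    (hg : MemLp g p μ)
    (hlim : ∀ h : X →ᵇ ℝ, Tendsto (fun n => ∫ x, h x * gs n x ∂μ) atTop (𝓝 (∫ x, h x * g x ∂μ)))
    {f : X → ℝ} (hf : MemLp f q μ) :
    Tendsto (fun n => ∫ x, f x * gs n x ∂μ) atTop (𝓝 (∫ x, f x * g x ∂μ)) := by
  rw [Metric.tendsto_nhds]
  intro ε hε
  set K := C.toReal + (eLpNorm g p μ).toReal + 1
  have hK : 0 < K := by positivity
  obtain ⟨h, hfh, hh⟩ := hf.exists_boundedContinuous_eLpNorm_sub_le hq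
    (ε := ENNReal.ofReal (ε / (2 * K))) (by simp; positivity)
  have hδ : (eLpNorm (f - ⇑h) q μ).toReal ≤ ε / (2 * K) :=
    toReal_le_of_le_ofReal (by positivity) hfh
  filter_upwards [hbdd, Metric.tendsto_nhds.1 (hlim h) (ε / 2) (by positivity)] with n hn hnh
  have hgsn : MemLp (gs n) p μ := ⟨hgs n, hn.trans_lt hC.lt_top⟩
  have hsplit : ∀ v : X → ℝ, MemLp v p μ →
      ∫ x, f x * v x ∂μ = ∫ x, (f - ⇑h) x * v x ∂μ + ∫ x, h x * v x ∂μ := fun v hv => by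
    have hfv : Integrable (fun x => f x * v x) μ := hf.integrable_mul hv
    have hhv : Integrable (fun x => h x * v x) μ := hh.integrable_mul hv
    simp only [Pi.sub_apply, sub_mul]
    rw [integral_sub hfv hhv, sub_add_cancel]
  have h1 := abs_integral_mul_le_toReal_eLpNorm_mul (hf.sub hh) hgsn
  have h2 := abs_integral_mul_le_toReal_eLpNorm_mul (hf.sub hh) hg
  have hsum : (eLpNorm (f - ⇑h) q μ).toReal * (eLpNorm (gs n) p μ).toReal
      + (eLpNorm (f - ⇑h) q μ).toReal * (eLpNorm g p μ).toReal ≤ ε / (2 * K) * K := by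
    rw [← mul_add]
    exact mul_le_mul hδ (by linarith [toReal_mono hC hn]) (by positivity) (by positivity)
  have hK2 : ε / (2 * K) * K = ε / 2 := by field_simp
  rw [Real.dist_eq] at hnh ⊢
  rw [hsplit _ hgsn, hsplit _ hg]
  set a := ∫ x, (f - ⇑h) x * gs n x ∂μ
  set b := ∫ x, (f - ⇑h) x * g x ∂μ
  have htri : |a + ∫ x, h x * gs n x ∂μ - (b + ∫ x, h x * g x ∂μ)|
      ≤ |a| + |b| + |∫ x, h x * gs n x ∂μ - ∫ x, h x * g x ∂μ| := by
    calc _ = |a + -b + (∫ x, h x * gs n x ∂μ - ∫ x, h x * g x ∂μ)| := by ring_nf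
      _ ≤ _ := abs_add_three _ _ _
      _ = _ := by rw [abs_neg]
  linarith

section rpowBregman

variable {p : ℝ} {f g : X → ℝ}

lemma integrable_rpowBregman (hp : 1 < p) (hf : MemLp f (ENNReal.ofReal p) μ)
    (hg : MemLp g (ENNReal.ofReal p) μ) (hf0 : ∀ x, 0 ≤ f x) (hg0 : ∀ x, 0 ≤ g x) :
    Integrable (fun x => rpowBregman p (f x) (g x)) μ := by
  have hfp := hf.integrable_rpow (by linarith) hf0
  have hgp := hg.integrable_rpow (by linarith) hg0
  have hgf := hf.integrable_rpow_sub_one_mul hp hg hg0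
  refine ((hfp.sub hgp).sub ((hgf.sub hgp).const_mul p)).congr (ae_of_all _ fun x => ?_)
  exact (rpowBregman_eq_sub (by linarith) (hg0 x)).symm

lemma integral_rpowBregman (hp : 1 < p) (hf : MemLp f (ENNReal.ofReal p) μ)
    (hg : MemLp g (ENNReal.ofReal p) μ) (hf0 : ∀ x, 0 ≤ f x) (hg0 : ∀ x, 0 ≤ g x) :
    ∫ x, rpowBregman p (f x) (g x) ∂μ = (∫ x, f x ^ p ∂μ - ∫ x, g x ^ p ∂μ)
      - p * (∫ x, g x ^ (p - 1) * f x ∂μ - ∫ x, g x ^ p ∂μ) := by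
  have hfp := hf.integrable_rpow (by linarith) hf0
  have hgp := hg.integrable_rpow (by linarith) hg0
  have hgf := hf.integrable_rpow_sub_one_mul hp hg hg0
  have h1 : Integrable (fun x => f x ^ p - g x ^ p) μ := hfp.sub hgp
  have h2 : Integrable (fun x => p * (g x ^ (p - 1) * f x - g x ^ p)) μ :=
    (hgf.sub hgp).const_mul p
  simp only [rpowBregman_eq_sub (by linarith : p ≠ 0) (hg0 _)]
  rw [integral_sub h1 h2, integral_sub hfp hgp, integral_const_mul, integral_sub hgf hgp]

end rpowBregman

lemma tendsto_integral_rpowBregman {p : ℝ} (hp : 1 < p) {ρs : ℕ → X → ℝ} {ρ : X → ℝ}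
    (hρs : ∀ᶠ n in atTop, MemLp (ρs n) (ENNReal.ofReal p) μ) (hρ : MemLp ρ (ENNReal.ofReal p) μ)
    (hρs0 : ∀ n x, 0 ≤ ρs n x) (hρ0 : ∀ x, 0 ≤ ρ x)
    (hweak : Tendsto (fun n => ∫ x, ρ x ^ (p - 1) * ρs n x ∂μ) atTop (𝓝 (∫ x, ρ x ^ p ∂μ)))
    (hlimsup : ∀ ε > 0, ∀ᶠ n in atTop, ∫ x, ρs n x ^ p ∂μ ≤ ∫ x, ρ x ^ p ∂μ + ε) :
    Tendsto (fun n => ∫ x, rpowBregman p (ρs n x) (ρ x) ∂μ) atTop (𝓝 0) := by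
  rw [tendsto_order]
  refine ⟨fun a ha => Eventually.of_forall fun n => ha.trans_le <|
    integral_nonneg fun x => rpowBregman_nonneg hp.le (hρs0 n x) (hρ0 x), fun a ha => ?_⟩
  have hp0 : 0 < p := by linarith
  have ha' : 0 < a / (2 * p) := by positivity
  filter_upwards [hρs, hlimsup (a / 2) (by positivity),
    (tendsto_order.1 hweak).1 (∫ x, ρ x ^ p ∂μ - a / (2 * p)) (by linarith)] with n hn hS hI
  rw [integral_rpowBregman hp hn hρ (hρs0 n) hρ0]
  have h1 : p * (∫ x, ρ x ^ p ∂μ - a / (2 * p)) < p * ∫ x, ρ x ^ (p - 1) * ρs n x ∂μ :=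
    mul_lt_mul_of_pos_left hI hp0
  have h2 : p * (a / (2 * p)) = a / 2 := by field_simp
  linarith

lemma tendsto_integral_posPart_sub_of_rpowBregman [IsProbabilityMeasure μ] {p : ℝ} (hp : 1 < p)
    {ρs : ℕ → X → ℝ} {ρ : X → ℝ} (hρs0 : ∀ n x, 0 ≤ ρs n x) (hρ0 : ∀ x, 0 ≤ ρ x)
    (hρp : Integrable (fun x => ρ x ^ p) μ)
    (hB : ∀ᶠ n in atTop, Integrable (fun x => rpowBregman p (ρs n x) (ρ x)) μ)
    (hlim : Tendsto (fun n => ∫ x, rpowBregman p (ρs n x) (ρ x) ∂μ) atTop (𝓝 0)) :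
    Tendsto (fun n => ∫ x, max (ρ x - ρs n x) 0 ∂μ) atTop (𝓝 0) := by
  rw [tendsto_order]
  refine ⟨fun a ha => Eventually.of_forall fun n => ha.trans_le <|
    integral_nonneg fun x => le_max_right _ _, fun δ hδ => ?_⟩
  have htail : Tendsto (fun M : ℝ => (∫ x, ρ x ^ p ∂μ) / M ^ (p - 1)) atTop (𝓝 0) :=
    tendsto_const_nhds.div_atTop (tendsto_rpow_atTop (by linarith))
  obtain ⟨M, hMtail, hM⟩ := ((htail.eventually (gt_mem_nhds (by positivity : 0 < δ / 3))).and
    (eventually_gt_atTop 0)).exists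
  obtain ⟨C, hC⟩ := exists_posPart_sub_le_rpowBregman hp (by positivity : 0 < δ / 3) hM
  have hCB : ∀ᶠ n in atTop, C * ∫ x, rpowBregman p (ρs n x) (ρ x) ∂μ < δ / 3 := by
    have := hlim.const_mul C
    rw [mul_zero] at this
    exact this.eventually (gt_mem_nhds (by positivity))
  filter_upwards [hB, hCB] with n hBn hCn
  have hρpM : Integrable (fun x => ρ x ^ p / M ^ (p - 1)) μ := hρp.div_const _
  have h1 : Integrable (fun x => δ / 3 + ρ x ^ p / M ^ (p - 1)) μ := (integrable_const _).add hρpM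
  have h2 : Integrable (fun x => C * rpowBregman p (ρs n x) (ρ x)) μ := hBn.const_mul C
  calc ∫ x, max (ρ x - ρs n x) 0 ∂μ
      ≤ ∫ x, δ / 3 + ρ x ^ p / M ^ (p - 1) + C * rpowBregman p (ρs n x) (ρ x) ∂μ :=
        integral_mono_of_nonneg (ae_of_all _ fun x => le_max_right _ _) (h1.add h2)
          (ae_of_all _ fun x => hC _ _ (hρs0 n x) (hρ0 x))
    _ = δ / 3 + (∫ x, ρ x ^ p ∂μ) / M ^ (p - 1) + C * ∫ x, rpowBregman p (ρs n x) (ρ x) ∂μ := by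
        rw [integral_add h1 h2, integral_add (integrable_const _) hρpM, integral_const,
          integral_div, integral_const_mul]
        simp
    _ < δ := by linarith

lemma integral_abs_sub_eq_two_mul_integral_posPart {f g : X → ℝ} (hf : Integrable f μ)
    (hg : Integrable g μ) (hfg : ∫ x, f x ∂μ = ∫ x, g x ∂μ) :
    ∫ x, |f x - g x| ∂μ = 2 * ∫ x, max (g x - f x) 0 ∂μ := by
  have hpt : ∀ x, |f x - g x| = (f x - g x) + 2 * max (g x - f x) 0 := fun x => by
    rcases le_total (f x) (g x) with h | h
    · rw [abs_of_nonpos (by linarith), max_eq_left (by linarith)]; ring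
    · rw [abs_of_nonneg (by linarith), max_eq_right (by linarith)]; ring
  have h1 : Integrable (fun x => f x - g x) μ := hf.sub hg
  have h2 : Integrable (fun x => 2 * max (g x - f x) 0) μ := (hg.sub hf).pos_part.const_mul 2
  simp_rw [hpt]
  rw [integral_add h1 h2, integral_sub hf hg, hfg, sub_self, zero_add, integral_const_mul]

end Lp

lemma renyiEntropy_withDensity_ofReal {X : Type*} [MeasurableSpace X] (N' : ℝ) (μ : Measure X)
    [SigmaFinite μ] {g : X → ℝ} (hg : Measurable g) :
    renyiEntropy N' μ (μ.withDensity fun x => ENNReal.ofReal (g x)) =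
      ∫⁻ x, ENNReal.ofReal (g x) ^ (1 - 1 / N') ∂μ := by
  rw [renyiEntropy, if_pos (withDensity_absolutelyContinuous μ _)]
  refine lintegral_congr_ae ?_
  filter_upwards [Measure.rnDeriv_withDensity μ hg.ennreal_ofReal] with x hx
  rw [hx]

theorem tendsto_integral_posPart_sub_of_weakConv {X : Type*} [TopologicalSpace X] [NormalSpace X]
    [MeasurableSpace X] [BorelSpace X] {μ : Measure X} [IsProbabilityMeasure μ] [μ.WeaklyRegular]
    {p : ℝ} (hp : 1 < p) {ρs : ℕ → X → ℝ} {ρ : X → ℝ} (hρsm : ∀ n, Measurable (ρs n))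
    (hρm : Measurable ρ) (hρsnn : ∀ n x, 0 ≤ ρs n x) (hρnn : ∀ x, 0 ≤ ρ x)
    (hw : WeakConv (fun n => μ.withDensity fun x => ENNReal.ofReal (ρs n x))
      (μ.withDensity fun x => ENNReal.ofReal (ρ x)))
    (hfin : ∫⁻ x, ENNReal.ofReal (ρ x) ^ p ∂μ < ∞)
    (hlimsup : limsup (fun n => ∫⁻ x, ENNReal.ofReal (ρs n x) ^ p ∂μ) atTop ≤
      ∫⁻ x, ENNReal.ofReal (ρ x) ^ p ∂μ) :
    Tendsto (fun n => ∫ x, max (ρ x - ρs n x) 0 ∂μ) atTop (𝓝 0) := by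
  have hp0 : 0 < p := by linarith
  have := (Real.HolderConjugate.conjExponent hp).ennrealOfReal
  have hS : ∀ ε > 0, ∀ᶠ n in atTop, ∫⁻ x, ENNReal.ofReal (ρs n x) ^ p ∂μ
      < ∫⁻ x, ENNReal.ofReal (ρ x) ^ p ∂μ + ENNReal.ofReal ε := fun ε hε =>
    eventually_lt_of_limsup_lt <|
      hlimsup.trans_lt (ENNReal.lt_add_right hfin.ne (by simpa using hε))
  have hρLp := memLp_ofReal_of_lintegral_lt_top hp0 hρm.aestronglyMeasurable hρnn hfin
  have hρsLp : ∀ᶠ n in atTop, MemLp (ρs n) (ENNReal.ofReal p) μ := (hS 1 one_pos).mono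
    fun n hn => memLp_ofReal_of_lintegral_lt_top hp0 (hρsm n).aestronglyMeasurable (hρsnn n)
      (hn.trans_le le_top)
  have hbdd : ∀ᶠ n in atTop, eLpNorm (ρs n) (ENNReal.ofReal p) μ
      ≤ (∫⁻ x, ENNReal.ofReal (ρ x) ^ p ∂μ + ENNReal.ofReal 1) ^ (1 / p) :=
    (hS 1 one_pos).mono fun n hn => by
      rw [eLpNorm_ofReal_eq_lintegral hp0 (hρsnn n)]
      gcongr
  have hlimsup' : ∀ ε > 0, ∀ᶠ n in atTop, ∫ x, ρs n x ^ p ∂μ ≤ ∫ x, ρ x ^ p ∂μ + ε :=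
    fun ε hε => (hS ε hε).mono fun n hn => by
      rw [integral_rpow_eq_toReal_lintegral hp0.le (hρsm n).aestronglyMeasurable (hρsnn n),
        integral_rpow_eq_toReal_lintegral hp0.le hρm.aestronglyMeasurable hρnn,
        ← toReal_ofReal hε.le, ← toReal_add hfin.ne ofReal_ne_top]
      exact toReal_mono (add_ne_top.2 ⟨hfin.ne, ofReal_ne_top⟩) hn.le
  have hweak : Tendsto (fun n => ∫ x, ρ x ^ (p - 1) * ρs n x ∂μ) atTop (𝓝 (∫ x, ρ x ^ p ∂μ)) := by
    have := tendsto_integral_mul_of_forall_boundedContinuous ofReal_ne_top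
      (rpow_ne_top_of_nonneg (by positivity) (add_ne_top.2 ⟨hfin.ne, ofReal_ne_top⟩))
      (fun n => (hρsm n).aestronglyMeasurable) hbdd hρLp
      (fun h => by simpa only [integral_withDensity_ofReal (hρsm _) (hρsnn _),
        integral_withDensity_ofReal hρm hρnn] using hw h) (hρLp.rpow_sub_one hp hρnn)
    simpa only [Real.rpow_sub_one_mul_self (hρnn _) hp0.ne'] using this
  exact tendsto_integral_posPart_sub_of_rpowBregman hp hρsnn hρnn (hρLp.integrable_rpow hp0 hρnn)
    (hρsLp.mono fun n hn => integrable_rpowBregman hp hn hρLp (hρsnn n) hρnn)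
    (tendsto_integral_rpowBregman hp hρsLp hρLp hρsnn hρnn hweak hlimsup')

open MeasureTheory Filter Set in
theorem L1_convergence_of_densities_general {X : Type*} [MetricSpace X]
    [MeasurableSpace X] [BorelSpace X]
    (N' : ℝ) (hN' : N' < 0)
    (μ : Measure X) [IsProbabilityMeasure μ]
    (ρs : ℕ → X → ℝ) (ρ : X → ℝ)
    (hρsm : ∀ n, Measurable (ρs n)) (hρm : Measurable ρ)
    (hρsnn : ∀ n x, 0 ≤ ρs n x) (hρnn : ∀ x, 0 ≤ ρ x)
    (hps : ∀ n, IsProbabilityMeasure (μ.withDensity fun x => ENNReal.ofReal (ρs n x)))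
    (hp : IsProbabilityMeasure (μ.withDensity fun x => ENNReal.ofReal (ρ x)))
    (hw : WeakConv (fun n => μ.withDensity fun x => ENNReal.ofReal (ρs n x))
      (μ.withDensity fun x => ENNReal.ofReal (ρ x)))
    (hfin : renyiEntropy N' μ (μ.withDensity fun x => ENNReal.ofReal (ρ x)) < ∞)
    (hlimsup : limsup (fun n =>
        renyiEntropy N' μ (μ.withDensity fun x => ENNReal.ofReal (ρs n x))) atTop ≤
      renyiEntropy N' μ (μ.withDensity fun x => ENNReal.ofReal (ρ x))) :
    Tendsto (fun n => ∫ x, |ρs n x - ρ x| ∂μ) atTop (nhds 0) := by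
  have hp1 : 1 < 1 - 1 / N' := by linarith [one_div_neg.2 hN']
  simp only [renyiEntropy_withDensity_ofReal N' μ hρm,
    renyiEntropy_withDensity_ofReal N' μ (hρsm _)] at hfin hlimsup
  have hpos := (tendsto_integral_posPart_sub_of_weakConv hp1 hρsm hρm hρsnn hρnn hw hfin
    hlimsup).const_mul 2
  rw [mul_zero] at hpos
  refine hpos.congr fun n => (integral_abs_sub_eq_two_mul_integral_posPart
    (integrable_of_isFiniteMeasure_withDensity (hρsm n) (hρsnn n))
    (integrable_of_isFiniteMeasure_withDensity hρm hρnn) ?_).symm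
  rw [integral_eq_one_of_isProbabilityMeasure_withDensity (hρsm n) (hρsnn n),
    integral_eq_one_of_isProbabilityMeasure_withDensity hρm hρnn]

open MeasureTheory Filter Set in
/-- Weak convergence plus convergence of Rényi entropies (`N' < 0`) implies
`L¹(μ)`-convergence of the densities. -/
theorem L1_convergence_of_densities {X : Type*} [MetricSpace X] [CompleteSpace X]
    [TopologicalSpace.SeparableSpace X] [MeasurableSpace X] [BorelSpace X]
    (N' : ℝ) (hN' : N' < 0)
    (μ : Measure X) [IsProbabilityMeasure μ]
    (ρs : ℕ → X → ℝ) (ρ : X → ℝ)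
    (hρsm : ∀ n, Measurable (ρs n)) (hρm : Measurable ρ)
    (hρsnn : ∀ n x, 0 ≤ ρs n x) (hρnn : ∀ x, 0 ≤ ρ x)
    (hps : ∀ n, IsProbabilityMeasure (μ.withDensity fun x => ENNReal.ofReal (ρs n x)))
    (hp : IsProbabilityMeasure (μ.withDensity fun x => ENNReal.ofReal (ρ x)))
    (hw : WeakConv (fun n => μ.withDensity fun x => ENNReal.ofReal (ρs n x))
      (μ.withDensity fun x => ENNReal.ofReal (ρ x)))
    (hfin : renyiEntropy N' μ (μ.withDensity fun x => ENNReal.ofReal (ρ x)) < ∞)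
    (hlimsup : limsup (fun n =>
        renyiEntropy N' μ (μ.withDensity fun x => ENNReal.ofReal (ρs n x))) atTop ≤
      renyiEntropy N' μ (μ.withDensity fun x => ENNReal.ofReal (ρ x))) :
    Tendsto (fun n => ∫ x, |ρs n x - ρ x| ∂μ) atTop (nhds 0) :=
  L1_convergence_of_densities_general N' hN' μ ρs ρ hρsm hρm hρsnn hρnn hps hp hw hfin hlimsup
end

section
/- Let a > 0, β ≥ 0, and let U be a nonempty open subset of ℝ. Define F_a : ℝ → ℝ by F_a(x) := a⁻¹·log(e^{ax} + e^{−ax}). If f : ℝ → ℝ is infinitely differentiable on U, and x ∈ U satisfies f''(x) + β·f(x) ≥ 0 and f(x) ≥ 0, then (F_a ∘ f)''(x) + β·F_a(f(x)) ≥ 0, where ' and '' denote the first and second derivatives. -/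
open MeasureTheory ENNReal Filter Topology Set

lemma hasDerivAt_tanh' (y : ℝ) : HasDerivAt Real.tanh (1 - Real.tanh y ^ 2) y := by
  have h := (Real.hasDerivAt_sinh y).div (Real.hasDerivAt_cosh y) (Real.cosh_pos y).ne'
  have he : Real.tanh = fun x => Real.sinh x / Real.cosh x := by
    funext x; exact Real.tanh_eq_sinh_div_cosh x
  rw [he]
  refine h.congr_deriv ?_
  have hc := (Real.cosh_pos y).ne'
  have hs := Real.cosh_sq_sub_sinh_sq y
  field_simp

lemma hasDerivAt_Fa (a : ℝ) (ha : 0 < a) (y : ℝ) :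
    HasDerivAt (fun x => a⁻¹ * Real.log (Real.exp (a * x) + Real.exp (-(a * x))))
      (Real.tanh (a * y)) y := by
  have h1 : HasDerivAt (fun x : ℝ => a * x) a y := by
    simpa using (hasDerivAt_id y).const_mul a
  have he1 := (Real.hasDerivAt_exp (a * y)).comp y h1
  have he2 := (Real.hasDerivAt_exp (-(a * y))).comp y h1.neg
  have hsum := he1.add he2
  have hpos : Real.exp (a * y) + Real.exp (-(a * y)) ≠ 0 := by positivity
  have hlog := (Real.hasDerivAt_log hpos).comp y hsum
  have := hlog.const_mul a⁻¹
  refine this.congr_deriv ?_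
  rw [Real.tanh_eq_sinh_div_cosh, Real.sinh_eq, Real.cosh_eq]
  field_simp
  ring

/-- If `f''(x) + β f(x) ≥ 0` and `f(x) ≥ 0` at a point `x` of an open set
on which `f` is smooth, then the same differential inequality holds for `F_a ∘ f` at `x`. -/
theorem Fa_comp_second_deriv_ineq (a β : ℝ) (ha : 0 < a) (hβ : 0 ≤ β)
    (U : Set ℝ) (hU : IsOpen U) (hne : U.Nonempty)
    (f : ℝ → ℝ) (hf : ContDiffOn ℝ (⊤ : ℕ∞) f U) (x : ℝ) (hx : x ∈ U)
    (h1 : 0 ≤ deriv (deriv f) x + β * f x) (h2 : 0 ≤ f x) :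
    0 ≤ deriv (deriv (fun y => Fa a (f y))) x + β * Fa a (f x) := by
  simp only [Fa]
  -- f differentiable on U
  have hUx : U ∈ nhds x := hU.mem_nhds hx
  have hfd : ∀ y ∈ U, HasDerivAt f (deriv f y) y := by
    intro y hy
    exact ((hf.contDiffAt (hU.mem_nhds hy)).differentiableAt (by simp)).hasDerivAt
  -- first derivative on U
  have hD1 : ∀ y ∈ U, HasDerivAt
      (fun y => a⁻¹ * Real.log (Real.exp (a * f y) + Real.exp (-(a * f y))))
      (Real.tanh (a * f y) * deriv f y) y := by
    intro y hy
    exact (hasDerivAt_Fa a ha (f y)).comp y (hfd y hy)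
  have hEq : deriv (fun y => a⁻¹ * Real.log (Real.exp (a * f y) + Real.exp (-(a * f y))))
      =ᶠ[nhds x] fun y => Real.tanh (a * f y) * deriv f y := by
    filter_upwards [hUx] with y hy using (hD1 y hy).deriv
  rw [Filter.EventuallyEq.deriv_eq hEq]
  -- second derivative at x
  have hdf : ContDiffOn ℝ 1 (deriv f) U := hf.deriv_of_isOpen hU (by exact WithTop.coe_le_coe.mpr le_top)
  have hdfx : HasDerivAt (deriv f) (deriv (deriv f) x) x :=
    ((hdf.contDiffAt hUx).differentiableAt (by simp)).hasDerivAt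
  have htanh : HasDerivAt (fun y => Real.tanh (a * f y))
      ((1 - Real.tanh (a * f x) ^ 2) * (a * deriv f x)) x := by
    have := (hasDerivAt_tanh' (a * f x)).comp x
      ((hfd x hx).const_mul a)
    exact this
  have hmul : HasDerivAt (fun y => Real.tanh (a * f y) * deriv f y) _ x := htanh.mul hdfx
  rw [hmul.deriv]
  -- the inequality
  set t := Real.tanh (a * f x) with ht
  have ht0 : 0 ≤ t := by
    rw [ht, Real.tanh_eq_sinh_div_cosh]
    exact div_nonneg (Real.sinh_nonneg_iff.2 (by positivity)) (Real.cosh_pos _).le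
  have ht1 : t ≤ 1 := by
    rw [ht, Real.tanh_eq_sinh_div_cosh]
    exact div_le_one_of_le₀ (Real.sinh_lt_cosh _).le (Real.cosh_pos _).le
  have hFa : f x ≤ a⁻¹ * Real.log (Real.exp (a * f x) + Real.exp (-(a * f x))) := by
    have : Real.exp (a * f x) ≤ Real.exp (a * f x) + Real.exp (-(a * f x)) := by
      nlinarith [Real.exp_pos (-(a * f x))]
    have hlog := Real.log_le_log (Real.exp_pos _) this
    rw [Real.log_exp] at hlog
    calc f x = a⁻¹ * (a * f x) := by field_simp
    _ ≤ _ := by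
      apply mul_le_mul_of_nonneg_left hlog (by positivity)
  have h1t : 0 ≤ 1 - t ^ 2 := by nlinarith
  have hsq : 0 ≤ (1 - t ^ 2) * (a * deriv f x) * deriv f x := by
    nlinarith [mul_nonneg (mul_nonneg h1t ha.le) (sq_nonneg (deriv f x))]
  rcases le_or_gt 0 (deriv (deriv f) x) with hc | hc
  · have : 0 ≤ t * deriv (deriv f) x := mul_nonneg ht0 hc
    nlinarith
  · have h3 : deriv (deriv f) x ≤ t * deriv (deriv f) x := by nlinarith
    nlinarith [mul_le_mul_of_nonneg_left hFa hβ]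
end

section
/- Let κ > 0 and r > 0 satisfy κ ≥ 1/r², and let a > 0. Define F_a : ℝ → ℝ by F_a(x) := a⁻¹·log(e^{ax} + e^{−ax}) and h : ℝ → ℝ by h(t) := F_a(sin(t/r)). Then h''(t) + κ·h(t) ≥ 0 for every t ∈ ℝ, where h'' denotes the second derivative of h. -/
open MeasureTheory ENNReal Filter Topology Set

/-! With `S = sin (t / r)`, the chain rule gives
`h'' = F_a''(S) · cos² (t / r) / r² - F_a'(S) · S / r²`. The first term is nonnegative since
`F_a'' = a / cosh² (a ·) ≥ 0`, and `F_a'(S) · S = tanh (a S) · S ≤ |S| ≤ F_a(S)`. Hence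
`h'' ≥ -F_a(S) / r² ≥ -κ · F_a(S)`, using `F_a ≥ 0` and `κ ≥ 1 / r²`. -/

open Real

lemma Real.hasDerivAt_tanh (x : ℝ) : HasDerivAt tanh (1 / cosh x ^ 2) x := by
  rw [show tanh = sinh / cosh from funext tanh_eq_sinh_div_cosh]
  refine ((hasDerivAt_sinh x).div (hasDerivAt_cosh x) (cosh_pos x).ne').congr_deriv ?_
  rw [← cosh_sq_sub_sinh_sq x]; ring

lemma hasDerivAt_Fa_s17 {a : ℝ} (ha : a ≠ 0) (x : ℝ) : HasDerivAt (Fa a) (tanh (a * x)) x := by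
  have hax : HasDerivAt (fun x => a * x) a x := hasDerivAt_const_mul a
  have hsum : exp (a * x) + exp (-(a * x)) ≠ 0 := by positivity
  refine (((hax.exp.add hax.neg.exp).log hsum).const_mul a⁻¹).congr_deriv ?_
  simp only [Pi.add_apply, Pi.neg_apply]
  rw [tanh_eq_sinh_div_cosh, sinh_eq, cosh_eq]
  field_simp
  ring

lemma hasDerivAt_tanh_const_mul (a x : ℝ) :
    HasDerivAt (fun x => tanh (a * x)) (a / cosh (a * x) ^ 2) x :=
  ((hasDerivAt_tanh (a * x)).comp x (hasDerivAt_const_mul a)).congr_deriv (by ring)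

lemma abs_le_Fa {a : ℝ} (ha : 0 < a) (x : ℝ) : |x| ≤ Fa a x := by
  have hexp : exp (a * |x|) ≤ exp (a * x) + exp (-(a * x)) := by
    rcases abs_cases x with ⟨hx, -⟩ | ⟨hx, -⟩
    · rw [hx]; exact le_add_of_nonneg_right (exp_pos _).le
    · rw [hx, mul_neg]; exact le_add_of_nonneg_left (exp_pos _).le
  rw [Fa, le_inv_mul_iff₀ ha, ← log_exp (a * |x|)]
  exact log_le_log (exp_pos _) hexp

lemma tanh_mul_le_abs (x y : ℝ) : tanh y * x ≤ |x| :=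
  calc tanh y * x ≤ |tanh y| * |x| := by rw [← abs_mul]; exact le_abs_self _
    _ ≤ |x| := mul_le_of_le_one_left (abs_nonneg x) (abs_tanh_lt_one y).le

lemma deriv_deriv_comp_sin_div {g g' g'' : ℝ → ℝ} (hg : ∀ x, HasDerivAt g (g' x) x)
    (hg' : ∀ x, HasDerivAt g' (g'' x) x) (r t : ℝ) :
    deriv (deriv fun s => g (sin (s / r))) t =
      g'' (sin (t / r)) * (cos (t / r) / r) ^ 2 - g' (sin (t / r)) * sin (t / r) / r ^ 2 := by
  have hdiv (s : ℝ) : HasDerivAt (fun s => s / r) (1 / r) s :=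
    (hasDerivAt_id' (x := s)).div_const r
  have hfirst :
      deriv (fun s => g (sin (s / r))) = fun s => g' (sin (s / r)) * (cos (s / r) / r) :=
    funext fun s => ((hg _).comp s (hdiv s).sin).deriv.trans (by ring)
  rw [hfirst]
  exact (((hg' _).comp t (hdiv t).sin).mul ((hdiv t).cos.div_const r)).deriv.trans
    (by simp only [Function.comp_apply]; ring)

theorem Fa_sin_second_deriv_ineq_general (κ r a : ℝ)
    (hκr : 1 / r ^ 2 ≤ κ) (ha : 0 < a) :
    ∀ t : ℝ,
      0 ≤ deriv (deriv fun s => Fa a (Real.sin (s / r))) t + κ * Fa a (Real.sin (t / r)) := by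
  intro t
  rw [deriv_deriv_comp_sin_div (hasDerivAt_Fa_s17 ha.ne') (hasDerivAt_tanh_const_mul a) r t]
  set S := sin (t / r)
  have hconvex : 0 ≤ a / cosh (a * S) ^ 2 * (cos (t / r) / r) ^ 2 := by positivity
  have hF : 0 ≤ Fa a S := (abs_nonneg S).trans (abs_le_Fa ha S)
  have hslope : tanh (a * S) * S / r ^ 2 ≤ Fa a S / r ^ 2 := by
    gcongr
    exact (tanh_mul_le_abs S _).trans (abs_le_Fa ha S)
  have hcurv : Fa a S / r ^ 2 ≤ κ * Fa a S := by
    calc Fa a S / r ^ 2 = 1 / r ^ 2 * Fa a S := by ring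
      _ ≤ κ * Fa a S := by gcongr
  linarith

/-- For `κ ≥ 1/r²` and `a > 0`, the function `h(t) = F_a(sin(t/r))`
satisfies `h'' + κ h ≥ 0` everywhere. -/
theorem Fa_sin_second_deriv_ineq (κ r a : ℝ) (hκ : 0 < κ) (hr : 0 < r)
    (hκr : 1 / r ^ 2 ≤ κ) (ha : 0 < a) :
    ∀ t : ℝ,
      0 ≤ deriv (deriv fun s => Fa a (Real.sin (s / r))) t + κ * Fa a (Real.sin (t / r)) :=
  Fa_sin_second_deriv_ineq_general κ r a hκr ha
end

section
/- Let (X, d) be a complete separable metric space, let μ be a nonzero locally finite Borel measure on X, and let N < 0. For t ∈ [0,1] and subsets A₀, A₁ ⊆ X define A_t := {γ(t) : γ : [0,1] → X is a geodesic with γ(0) ∈ A₀ and γ(1) ∈ A₁}, where a geodesic is a map γ with d(γ(s), γ(s')) = |s − s'|·d(γ(0), γ(1)) for all s, s' ∈ [0,1], and μ(A_t) denotes the outer measure of A_t. Suppose that for every K > 0, every t ∈ [0,1], and all Borel sets A₀, A₁ ⊆ X with 0 < μ(A_i) < ∞ (i = 0,1), the Brunn–Minkowski inequality μ(A_t)^{1/N}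 ≤ Σ_{i=0,1} (sup_{x∈A₀, y∈A₁} σ_{K/N}^{(t),i}(d(x,y)))·μ(A_i)^{1/N} holds, where powers of measures are taken in [0,∞] with the conventions 0^{1/N} = ∞ and ∞^{1/N} = 0 (note 1/N < 0). Then the support of μ consists of exactly one point. -/
open MeasureTheory ENNReal Filter Topology Set

/-!
Suppose the support contains two points `x ≠ y`. Take small balls `A₀` around `x` and `A₁`
around `y`, at distance at least `δ > 0` from each other, and `t > 0` so small that the
intermediate set `A_t` lies in a ball around `x` of finite measure; then the left side
`μ(A_t)^{1/N}` of Brunn–Minkowski is a positive constant independent of `K`. For `K/N = -c²`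
the coefficients are `σ^{(s)}(θ) = sinh(csθ)/sinh(cθ) ≤ e^{-c(1-s)θ}`, so the right side is at most
`e^{-c·min(t,1-t)·δ} (μ(A₀)^{1/N} + μ(A₁)^{1/N})`, which tends to `0` as `c → ∞`.
-/

open Metric Real

lemma Real.sinh_div_sinh_le_exp_sub {a b : ℝ} (hab : a ≤ b) (hb : 0 < b) :
    sinh a / sinh b ≤ exp (a - b) := by
  rw [div_le_iff₀ (sinh_pos_iff.2 hb), ← sub_nonneg]
  have : exp (a - b) ≤ exp (b - a) := exp_le_exp.2 (by linarith)
  calc 0 ≤ exp (-b) * (exp (b - a) - exp (a - b)) / 2 :=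
        div_nonneg (mul_nonneg (exp_pos _).le (sub_nonneg.2 this)) zero_le_two
    _ = exp (a - b) * sinh b - sinh a := by
      simp only [sinh_eq, exp_sub, exp_neg]
      field_simp
      ring

lemma omegaKappa_of_nonpos {κ : ℝ} (hκ : κ ≤ 0) : omegaKappa κ = ∞ := if_neg hκ.not_gt

lemma sKappa_neg_sq {c θ : ℝ} (hc : 0 < c) (hθ : θ ≠ 0) :
    sKappa (-c ^ 2) θ = sinh (c * θ) / (c * θ) := by
  have hκ : -c ^ 2 < 0 := neg_neg_of_pos (pow_pos hc 2)
  rw [sKappa, if_neg hθ, if_neg hκ.not_gt, if_pos hκ, neg_neg, sqrt_sq hc.le]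

lemma sigmaCoeff_neg_sq {c s θ : ℝ} (hc : 0 < c) (hs : s ≠ 0) (hθ : θ ≠ 0) :
    sigmaCoeff (-c ^ 2) s θ = ENNReal.ofReal (sinh (c * s * θ) / sinh (c * θ)) := by
  rw [sigmaCoeff, omegaKappa_of_nonpos (neg_nonpos.2 (sq_nonneg c)), if_pos ofReal_lt_top,
    sKappa_neg_sq hc (mul_ne_zero hs hθ), sKappa_neg_sq hc hθ]
  have : sinh (c * θ) ≠ 0 := sinh_ne_zero.2 (mul_ne_zero hc.ne' hθ)
  congr 1
  field_simp

lemma sigmaCoeff_neg_sq_le_exp {c s θ : ℝ} (hc : 0 < c) (hs : s ≤ 1) (hθ : 0 < θ) :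
    sigmaCoeff (-c ^ 2) s θ ≤ ENNReal.ofReal (exp (-(c * (1 - s) * θ))) := by
  rcases eq_or_ne s 0 with rfl | hs₀
  · simp [sigmaCoeff, omegaKappa_of_nonpos (neg_nonpos.2 (sq_nonneg c))]
  rw [sigmaCoeff_neg_sq hc hs₀ hθ.ne']
  refine ENNReal.ofReal_le_ofReal ((sinh_div_sinh_le_exp_sub ?_ (by positivity)).trans_eq ?_)
  · nlinarith [mul_pos hc hθ]
  · ring_nf

lemma ENNReal.rpow_pos_of_nonpos {a : ℝ≥0∞} {z : ℝ} (ha : a ≠ ∞) (hz : z ≤ 0) : 0 < a ^ z := by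
  rw [← neg_neg z, ENNReal.rpow_neg]
  exact ENNReal.inv_pos.2 (ENNReal.rpow_ne_top_of_nonneg (neg_nonneg.2 hz) ha)

lemma exists_pos_ofReal_exp_neg_mul_lt {a : ℝ} (ha : 0 < a) {M L : ℝ≥0∞} (hM : M ≠ ∞)
    (hL : 0 < L) : ∃ c : ℝ, 0 < c ∧ ENNReal.ofReal (exp (-(c * a))) * M < L := by
  have hlim : Tendsto (fun c : ℝ => ENNReal.ofReal (exp (-(c * a))) * M) atTop (𝓝 0) := by
    have := tendsto_exp_neg_atTop_nhds_zero.comp (tendsto_id.atTop_mul_const ha)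
    simpa using ENNReal.Tendsto.mul_const (ENNReal.tendsto_ofReal this) (Or.inr hM)
  obtain ⟨c, hcL, hc⟩ := ((hlim.eventually (gt_mem_nhds hL)).and (eventually_gt_atTop 0)).exists
  exact ⟨c, hc, hcL⟩

lemma MeasureTheory.Measure.mem_support_iff_forall_ball_pos {X : Type*} [PseudoMetricSpace X]
    [MeasurableSpace X] {μ : Measure X} {x : X} :
    x ∈ μ.support ↔ ∀ r : ℝ, 0 < r → 0 < μ (ball x r) :=
  nhds_basis_ball.mem_measureSupport

section BrunnMinkowski

variable {X : Type*} [PseudoMetricSpace X]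

/-- The set `A_t` of `t`-intermediate points of geodesics from `A₀` to `A₁`. -/
def intermediateSet (A₀ A₁ : Set X) (t : ℝ) : Set X :=
  {z | ∃ γ : ℝ → X, IsGeodOn01 γ ∧ γ 0 ∈ A₀ ∧ γ 1 ∈ A₁ ∧ γ t = z}

/-- The Brunn–Minkowski inequality of `CD*(K,N)`, `N < 0`. -/
def SatisfiesBrunnMinkowski [MeasurableSpace X] (μ : Measure X) (K N : ℝ) : Prop :=
  ∀ t ∈ Icc (0:ℝ) 1, ∀ A₀ A₁ : Set X, MeasurableSet A₀ → MeasurableSet A₁ →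
    0 < μ A₀ → μ A₀ < ∞ → 0 < μ A₁ → μ A₁ < ∞ →
    μ (intermediateSet A₀ A₁ t) ^ (1 / N) ≤
      (⨆ x ∈ A₀, ⨆ y ∈ A₁, sigmaCoeff (K / N) (1 - t) (dist x y)) * μ A₀ ^ (1 / N)
        + (⨆ x ∈ A₀, ⨆ y ∈ A₁, sigmaCoeff (K / N) t (dist x y)) * μ A₁ ^ (1 / N)

lemma IsGeodOn01.dist_apply_zero {γ : ℝ → X} (hγ : IsGeodOn01 γ) {t : ℝ}
    (ht : t ∈ Icc (0:ℝ) 1) : dist (γ t) (γ 0) = t * dist (γ 0) (γ 1) := by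
  rw [hγ t ht 0 ⟨le_rfl, zero_le_one⟩, sub_zero, abs_of_nonneg ht.1]

lemma intermediateSet_ball_subset_ball {x y : X} {r t : ℝ} (ht : t ∈ Icc (0:ℝ) 1) :
    intermediateSet (ball x r) (ball y r) t ⊆ ball x (r + t * (dist x y + 2 * r)) := by
  rintro _ ⟨γ, hγ, h₀, h₁, rfl⟩
  rw [mem_ball] at h₀ h₁ ⊢
  have hends : dist (γ 0) (γ 1) ≤ dist x y + 2 * r := by
    have := dist_triangle4 (γ 0) x y (γ 1)
    rw [dist_comm y] at this
    linarith
  calc dist (γ t) x ≤ dist (γ t) (γ 0) + dist (γ 0) x := dist_triangle _ _ _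
    _ < t * (dist x y + 2 * r) + r := by
      rw [hγ.dist_apply_zero ht]
      exact add_lt_add_of_le_of_lt (mul_le_mul_of_nonneg_left hends ht.1) h₀
    _ = r + t * (dist x y + 2 * r) := add_comm _ _

lemma iSup_sigmaCoeff_neg_sq_le {A₀ A₁ : Set X} {c s u δ : ℝ} (hc : 0 < c) (hδ : 0 < δ)
    (hsep : ∀ x ∈ A₀, ∀ y ∈ A₁, δ ≤ dist x y) (hu : 0 ≤ u) (hus : u ≤ 1 - s) :
    ⨆ x ∈ A₀, ⨆ y ∈ A₁, sigmaCoeff (-c ^ 2) s (dist x y) ≤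
      ENNReal.ofReal (exp (-(c * (u * δ)))) := by
  refine iSup₂_le fun x hx => iSup₂_le fun y hy => ?_
  have hxy := hsep x hx y hy
  refine (sigmaCoeff_neg_sq_le_exp hc (by linarith) (hδ.trans_le hxy)).trans ?_
  refine ENNReal.ofReal_le_ofReal (exp_le_exp.2 (neg_le_neg ?_))
  have : 0 ≤ c * (1 - s) := mul_nonneg hc.le (hu.trans hus)
  rw [← mul_assoc]
  gcongr

variable [MeasurableSpace X]

theorem not_forall_satisfiesBrunnMinkowski {μ : Measure X} {N : ℝ} (hN : N < 0)
    {A₀ A₁ : Set X} (hA₀ : MeasurableSet A₀) (hA₁ : MeasurableSet A₁)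
    (hpos₀ : 0 < μ A₀) (hfin₀ : μ A₀ < ∞) (hpos₁ : 0 < μ A₁) (hfin₁ : μ A₁ < ∞)
    {δ : ℝ} (hδ : 0 < δ) (hsep : ∀ x ∈ A₀, ∀ y ∈ A₁, δ ≤ dist x y)
    {t : ℝ} (ht : t ∈ Ioo (0:ℝ) 1) (hAt : μ (intermediateSet A₀ A₁ t) < ∞) :
    ¬ ∀ K, 0 < K → SatisfiesBrunnMinkowski μ K N := by
  intro hBM
  have hN' : 1 / N ≤ 0 := (one_div_neg.2 hN).le
  set u := min t (1 - t)
  have hu : 0 < u := lt_min ht.1 (sub_pos.2 ht.2)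
  obtain ⟨c, hc, hcL⟩ := exists_pos_ofReal_exp_neg_mul_lt (mul_pos hu hδ)
    (ENNReal.add_ne_top.2 ⟨ENNReal.rpow_ne_top_of_ne_zero hpos₀.ne' hfin₀.ne,
      ENNReal.rpow_ne_top_of_ne_zero hpos₁.ne' hfin₁.ne⟩)
    (ENNReal.rpow_pos_of_nonpos hAt.ne hN')
  have hK : -N * c ^ 2 / N = -c ^ 2 := by field_simp [hN.ne]
  have hBMc := hBM (-N * c ^ 2) (by nlinarith [mul_pos hc hc]) t (Ioo_subset_Icc_self ht)
    A₀ A₁ hA₀ hA₁ hpos₀ hfin₀ hpos₁ hfin₁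
  rw [hK] at hBMc
  refine hcL.not_ge (hBMc.trans ?_)
  rw [mul_add]
  gcongr
  · exact iSup_sigmaCoeff_neg_sq_le hc hδ hsep hu.le (by simp [u])
  · exact iSup_sigmaCoeff_neg_sq_le hc hδ hsep hu.le (min_le_right _ _)

end BrunnMinkowski

theorem eq_of_mem_support_of_forall_satisfiesBrunnMinkowski {X : Type*} [MetricSpace X]
    [MeasurableSpace X] [OpensMeasurableSpace X] {μ : Measure X}
    (hloc : ∀ x : X, ∃ r : ℝ, 0 < r ∧ μ (ball x r) < ∞) {N : ℝ} (hN : N < 0)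
    (hBM : ∀ K, 0 < K → SatisfiesBrunnMinkowski μ K N) {x y : X}
    (hx : x ∈ μ.support) (hy : y ∈ μ.support) : x = y := by
  by_contra hxy
  set d := dist x y
  have hd : 0 < d := dist_pos.2 hxy
  obtain ⟨R, hR, hRfin⟩ := hloc x
  obtain ⟨R', hR', hR'fin⟩ := hloc y
  set r := min (min (R / 2) R') (d / 4)
  have hr : 0 < r := by positivity
  have hrR : r ≤ R / 2 := (min_le_left _ _).trans (min_le_left _ _)
  have hrR' : r ≤ R' := (min_le_left _ _).trans (min_le_right _ _)
  have hrd : r ≤ d / 4 := min_le_right _ _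
  -- this `t` makes the intermediate points stay within distance `2 r` of `x`
  set t := r / (d + 2 * r)
  have ht : t ∈ Ioo (0:ℝ) 1 := ⟨by positivity, (div_lt_one (by positivity)).2 (by linarith)⟩
  have hAt : intermediateSet (ball x r) (ball y r) t ⊆ ball x R := by
    refine (intermediateSet_ball_subset_ball (Ioo_subset_Icc_self ht)).trans (ball_subset_ball ?_)
    rw [div_mul_cancel₀ _ (by positivity)]
    linarith
  have hsep : ∀ x' ∈ ball x r, ∀ y' ∈ ball y r, d / 2 ≤ dist x' y' := by
    intro x' hx' y' hy'
    rw [mem_ball'] at hx'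
    rw [mem_ball] at hy'
    linarith [dist_triangle4 x x' y' y]
  exact not_forall_satisfiesBrunnMinkowski hN measurableSet_ball measurableSet_ball
    (Measure.mem_support_iff_forall_ball_pos.1 hx r hr)
    ((measure_mono (ball_subset_ball (by linarith))).trans_lt hRfin)
    (Measure.mem_support_iff_forall_ball_pos.1 hy r hr)
    ((measure_mono (ball_subset_ball hrR')).trans_lt hR'fin)
    (half_pos hd) hsep ht ((measure_mono hAt).trans_lt hRfin) hBM

open MeasureTheory Set in
theorem support_singleton_of_BM_all_K_general {X : Type*} [MetricSpace X]
    [TopologicalSpace.SeparableSpace X] [MeasurableSpace X] [BorelSpace X]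
    (μ : Measure X) (hμ0 : μ ≠ 0) (hloc : ∀ x : X, ∃ r : ℝ, 0 < r ∧ μ (Metric.ball x r) < ∞)
    (N : ℝ) (hN : N < 0)
    (hBM : ∀ K : ℝ, 0 < K → ∀ t ∈ Icc (0:ℝ) 1, ∀ A₀ A₁ : Set X,
      MeasurableSet A₀ → MeasurableSet A₁ →
      0 < μ A₀ → μ A₀ < ∞ → 0 < μ A₁ → μ A₁ < ∞ →
      μ {z | ∃ γ : ℝ → X, IsGeodOn01 γ ∧ γ 0 ∈ A₀ ∧ γ 1 ∈ A₁ ∧ γ t = z} ^ (1 / N) ≤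
        (⨆ x ∈ A₀, ⨆ y ∈ A₁, sigmaCoeff (K / N) (1 - t) (dist x y)) * μ A₀ ^ (1 / N)
          + (⨆ x ∈ A₀, ⨆ y ∈ A₁, sigmaCoeff (K / N) t (dist x y)) * μ A₁ ^ (1 / N)) :
    ∃ x : X, {y : X | ∀ r : ℝ, 0 < r → 0 < μ (Metric.ball y r)} = {x} := by
  have hsupport : {y : X | ∀ r : ℝ, 0 < r → 0 < μ (Metric.ball y r)} = μ.support :=
    Set.ext fun _ => Measure.mem_support_iff_forall_ball_pos.symm
  obtain ⟨x, hx⟩ := μ.nonempty_support hμ0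
  refine ⟨x, hsupport ▸ eq_singleton_iff_unique_mem.2 ⟨hx, fun y hy => ?_⟩⟩
  exact eq_of_mem_support_of_forall_satisfiesBrunnMinkowski hloc hN hBM hy hx

open MeasureTheory Set in
/-- If a nonzero locally finite Borel measure on a complete separable metric
space satisfies the Brunn–Minkowski inequality of `CD*(K,N)` (`N < 0`) for every `K > 0`, then
its support is a single point. -/
theorem support_singleton_of_BM_all_K {X : Type*} [MetricSpace X] [CompleteSpace X]
    [TopologicalSpace.SeparableSpace X] [MeasurableSpace X] [BorelSpace X]
    (μ : Measure X) (hμ0 : μ ≠ 0) (hloc : ∀ x : X, ∃ r : ℝ, 0 < r ∧ μ (Metric.ball x r) < ∞)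
    (N : ℝ) (hN : N < 0)
    (hBM : ∀ K : ℝ, 0 < K → ∀ t ∈ Icc (0:ℝ) 1, ∀ A₀ A₁ : Set X,
      MeasurableSet A₀ → MeasurableSet A₁ →
      0 < μ A₀ → μ A₀ < ∞ → 0 < μ A₁ → μ A₁ < ∞ →
      μ {z | ∃ γ : ℝ → X, IsGeodOn01 γ ∧ γ 0 ∈ A₀ ∧ γ 1 ∈ A₁ ∧ γ t = z} ^ (1 / N) ≤
        (⨆ x ∈ A₀, ⨆ y ∈ A₁, sigmaCoeff (K / N) (1 - t) (dist x y)) * μ A₀ ^ (1 / N)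
          + (⨆ x ∈ A₀, ⨆ y ∈ A₁, sigmaCoeff (K / N) t (dist x y)) * μ A₁ ^ (1 / N)) :
    ∃ x : X, {y : X | ∀ r : ℝ, 0 < r → 0 < μ (Metric.ball y r)} = {x} :=
  support_singleton_of_BM_all_K_general μ hμ0 hloc N hN hBM
end
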